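/- arXiv:math/0604197 — 8 statements merged into one kernel-verified Lean document; each statement's English description precedes it below -/
import Mathlib

section
/- Let κ > 0 and let I : (0,1) → [0,∞) be a concave continuous function. Define ᾱ_1 := 2^κ · sup_{0<s<1} I(s), and ᾱ_2 := sup_{0<s<1} [I(s)/(s(1−s))]·(s^{1/(κ−1)}+(1−s)^{1/(κ−1)})^{κ−1} if κ < 1; ᾱ_2 := 2·I(1/2) if κ = 1; ᾱ_2 := inf_{0<s<1} [I(s)/(s(1−s))]·(s^{1/(κ−1)}+(1−s)^{1/(κ−1)})^{κ−1} if κ > 1. Then ᾱ_1 ≥ ᾱ_2. -/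
open Set

/-- The upper bound `ᾱ₁ = 2^κ ⬝ sup_{0<s<1} I(s)` of Theorem 1. -/
noncomputable def alphaBar1 (κ : ℝ) (I : ℝ → ℝ) : ℝ :=
  2 ^ κ * ⨆ s : Ioo (0 : ℝ) 1, I s

/-- The upper bound `ᾱ₂` of Theorem 2, defined by cases on `κ`. -/
noncomputable def alphaBar2 (κ : ℝ) (I : ℝ → ℝ) : ℝ :=
  if κ < 1 then
    ⨆ s : Ioo (0 : ℝ) 1, I s / ((s : ℝ) * (1 - (s : ℝ))) *
      ((s : ℝ) ^ (1 / (κ - 1)) + (1 - (s : ℝ)) ^ (1 / (κ - 1))) ^ (κ - 1)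
  else if κ = 1 then 2 * I (1 / 2)
  else
    ⨅ s : Ioo (0 : ℝ) 1, I s / ((s : ℝ) * (1 - (s : ℝ))) *
      ((s : ℝ) ^ (1 / (κ - 1)) + (1 - (s : ℝ)) ^ (1 / (κ - 1))) ^ (κ - 1)

/-!
With `q = 1/(1-κ)`, one has `a^{1/(κ-1)} + b^{1/(κ-1)} = (ab)^{-q} (a^q + b^q)` for `a, b > 0`.
When `0 ≤ κ < 1` we have `q ≥ 1`, and on `a + b = 1` the power mean inequality
`a^q + b^q ≥ 2^{1-q}` raised to the negative power `κ - 1` bounds the weight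
`(s^{1/(κ-1)} + (1-s)^{1/(κ-1)})^{κ-1} / (s(1-s))` by `2^κ`; so every term of the supremum
defining `ᾱ₂` is at most `2^κ I(s)`. For `κ ≥ 1` it is enough to look at `s = 1/2`, where the
weight equals `2^κ` exactly. Concavity and nonnegativity give `I(s) ≤ I(s) + I(1-s) ≤ 2 I(1/2)`,
so the supremum of `I` is a genuine one.
-/

namespace Real

theorem rpow_add_le_mul_rpow_add_rpow {a b p : ℝ} (ha : 0 ≤ a) (hb : 0 ≤ b) (hp : 1 ≤ p) :
    (a + b) ^ p ≤ 2 ^ (p - 1) * (a ^ p + b ^ p) := by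
  lift a to NNReal using ha
  lift b to NNReal using hb
  exact_mod_cast NNReal.rpow_add_le_mul_rpow_add_rpow a b hp

theorem two_rpow_one_sub_le_rpow_add_rpow {a b p : ℝ} (ha : 0 ≤ a) (hb : 0 ≤ b) (hp : 1 ≤ p)
    (hab : a + b = 1) : 2 ^ (1 - p) ≤ a ^ p + b ^ p := by
  have h := rpow_add_le_mul_rpow_add_rpow ha hb hp
  rw [hab, one_rpow] at h
  calc (2 : ℝ) ^ (1 - p) = 2 ^ (1 - p) * 1 := (mul_one _).symm
    _ ≤ 2 ^ (1 - p) * (2 ^ (p - 1) * (a ^ p + b ^ p)) := by gcongr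
    _ = a ^ p + b ^ p := by
      rw [← mul_assoc, ← rpow_add two_pos, sub_add_sub_cancel', sub_self, rpow_zero, one_mul]

end Real

theorem rpow_add_rpow_rpow_le {κ a b : ℝ} (hκ0 : 0 ≤ κ) (hκ1 : κ < 1) (ha : 0 < a) (hb : 0 < b)
    (hab : a + b = 1) :
    (a ^ (1 / (κ - 1)) + b ^ (1 / (κ - 1))) ^ (κ - 1) ≤ 2 ^ κ * (a * b) := by
  set q := 1 / (1 - κ) with hq
  have hκ1' : 0 < 1 - κ := by linarith
  have hq1 : 1 ≤ q := by rw [hq, le_div_iff₀ hκ1']; linarith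
  have hexp : 1 / (κ - 1) = -q := by rw [hq, ← one_div_neg_eq_neg_one_div, neg_sub]
  have hqκ : -q * (κ - 1) = 1 := by rw [← hexp]; field_simp [(by linarith : κ - 1 ≠ 0)]
  have hpowmean := Real.two_rpow_one_sub_le_rpow_add_rpow ha.le hb.le hq1 hab
  have hsplit : a ^ (-q) + b ^ (-q) = (a * b) ^ (-q) * (a ^ q + b ^ q) := by
    rw [Real.mul_rpow ha.le hb.le, Real.rpow_neg ha.le, Real.rpow_neg hb.le]
    field_simp
    ring
  calc (a ^ (1 / (κ - 1)) + b ^ (1 / (κ - 1))) ^ (κ - 1)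
      = a * b * (a ^ q + b ^ q) ^ (κ - 1) := by
        rw [hexp, hsplit, Real.mul_rpow (by positivity) (by positivity),
          ← Real.rpow_mul (by positivity), hqκ, Real.rpow_one]
    _ ≤ a * b * (2 ^ (1 - q)) ^ (κ - 1) :=
        mul_le_mul_of_nonneg_left
          (Real.rpow_le_rpow_of_nonpos (by positivity) hpowmean (by linarith)) (by positivity)
    _ = 2 ^ κ * (a * b) := by
        rw [← Real.rpow_mul zero_le_two, show (1 - q) * (κ - 1) = κ by linear_combination hqκ,
          mul_comm]

theorem rpow_add_rpow_rpow_half {κ : ℝ} (hκ : κ ≠ 1) :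
    ((1 / 2 : ℝ) ^ (1 / (κ - 1)) + (1 - 1 / 2) ^ (1 / (κ - 1))) ^ (κ - 1)
      = 2 ^ κ * (1 / 2 * (1 - 1 / 2)) := by
  have hκ' : κ - 1 ≠ 0 := sub_ne_zero.mpr hκ
  rw [show (1 : ℝ) - 1 / 2 = 1 / 2 by norm_num, ← two_mul,
    Real.mul_rpow zero_le_two (by positivity), ← Real.rpow_mul (by norm_num),
    one_div_mul_cancel hκ', Real.rpow_one, Real.rpow_sub_one two_ne_zero]
  ring

theorem bddAbove_range_of_concaveOn_Ioo {I : ℝ → ℝ} (hI : ConcaveOn ℝ (Ioo 0 1) I)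
    (hI_nonneg : ∀ s ∈ Ioo (0 : ℝ) 1, 0 ≤ I s) :
    BddAbove (range fun s : Ioo (0 : ℝ) 1 => I s) := by
  refine ⟨2 * I (1 / 2), ?_⟩
  rintro _ ⟨⟨s, hs⟩, rfl⟩
  have hs' : 1 - s ∈ Ioo (0 : ℝ) 1 := ⟨by linarith [hs.2], by linarith [hs.1]⟩
  have h := hI.2 hs hs' (by norm_num : (0 : ℝ) ≤ 1 / 2) (by norm_num : (0 : ℝ) ≤ 1 / 2)
    (by norm_num)
  rw [smul_eq_mul, smul_eq_mul, smul_eq_mul, smul_eq_mul,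
    show 1 / 2 * s + 1 / 2 * (1 - s) = 1 / 2 by ring] at h
  linarith [hI_nonneg _ hs']

section

variable {κ : ℝ} {I : ℝ → ℝ}

theorem two_rpow_mul_le_alphaBar1 (hbdd : BddAbove (range fun s : Ioo (0 : ℝ) 1 => I s))
    {s : ℝ} (hs : s ∈ Ioo (0 : ℝ) 1) : 2 ^ κ * I s ≤ alphaBar1 κ I :=
  mul_le_mul_of_nonneg_left (le_ciSup hbdd ⟨s, hs⟩) (by positivity)

theorem alphaBar2_le_alphaBar1_of_lt_one (hκ0 : 0 ≤ κ) (hκ1 : κ < 1)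
    (hI_nonneg : ∀ s ∈ Ioo (0 : ℝ) 1, 0 ≤ I s)
    (hbdd : BddAbove (range fun s : Ioo (0 : ℝ) 1 => I s)) :
    alphaBar2 κ I ≤ alphaBar1 κ I := by
  have : Nonempty (Ioo (0 : ℝ) 1) := ⟨⟨1 / 2, by norm_num, by norm_num⟩⟩
  rw [alphaBar2, if_pos hκ1]
  refine ciSup_le fun ⟨s, hs⟩ => ?_
  have hs_pos : 0 < s * (1 - s) := mul_pos hs.1 (sub_pos.2 hs.2)
  have hI_div : 0 ≤ I s / (s * (1 - s)) := div_nonneg (hI_nonneg s hs) hs_pos.le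
  calc I s / (s * (1 - s)) * (s ^ (1 / (κ - 1)) + (1 - s) ^ (1 / (κ - 1))) ^ (κ - 1)
      ≤ I s / (s * (1 - s)) * (2 ^ κ * (s * (1 - s))) :=
        mul_le_mul_of_nonneg_left
          (rpow_add_rpow_rpow_le hκ0 hκ1 hs.1 (sub_pos.2 hs.2) (add_sub_cancel _ _)) hI_div
    _ = 2 ^ κ * I s := by rw [mul_left_comm, div_mul_cancel₀ _ hs_pos.ne']
    _ ≤ alphaBar1 κ I := two_rpow_mul_le_alphaBar1 hbdd hs

theorem alphaBar2_le_alphaBar1_of_one_lt (hκ1 : 1 < κ)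
    (hI_nonneg : ∀ s ∈ Ioo (0 : ℝ) 1, 0 ≤ I s)
    (hbdd : BddAbove (range fun s : Ioo (0 : ℝ) 1 => I s)) :
    alphaBar2 κ I ≤ alphaBar1 κ I := by
  rw [alphaBar2, if_neg hκ1.not_gt, if_neg hκ1.ne']
  have hhalf : (1 / 2 : ℝ) ∈ Ioo 0 1 := by norm_num
  have hbdd_below : BddBelow (range fun s : Ioo (0 : ℝ) 1 => I s / ((s : ℝ) * (1 - (s : ℝ))) *
      ((s : ℝ) ^ (1 / (κ - 1)) + (1 - (s : ℝ)) ^ (1 / (κ - 1))) ^ (κ - 1)) := by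
    refine ⟨0, ?_⟩
    rintro _ ⟨⟨s, hs⟩, rfl⟩
    have := hI_nonneg s hs
    have := hs.1
    have := sub_pos.2 hs.2
    positivity
  calc _ ≤ I (1 / 2) / (1 / 2 * (1 - 1 / 2)) *
        ((1 / 2 : ℝ) ^ (1 / (κ - 1)) + (1 - 1 / 2) ^ (1 / (κ - 1))) ^ (κ - 1) :=
        ciInf_le hbdd_below ⟨1 / 2, hhalf⟩
    _ = 2 ^ κ * I (1 / 2) := by rw [rpow_add_rpow_rpow_half hκ1.ne']; field_simp
    _ ≤ alphaBar1 κ I := two_rpow_mul_le_alphaBar1 hbdd hhalf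

end

theorem stmt2_general (κ : ℝ) (hκ : 0 < κ) (I : ℝ → ℝ)
    (hI_concave : ConcaveOn ℝ (Ioo 0 1) I)
    (hI_nonneg : ∀ s ∈ Ioo (0 : ℝ) 1, 0 ≤ I s) :
    alphaBar2 κ I ≤ alphaBar1 κ I := by
  have hbdd := bddAbove_range_of_concaveOn_Ioo hI_concave hI_nonneg
  rcases lt_trichotomy κ 1 with hκ1 | rfl | hκ1
  · exact alphaBar2_le_alphaBar1_of_lt_one hκ.le hκ1 hI_nonneg hbdd
  · simpa [alphaBar2] using two_rpow_mul_le_alphaBar1 (κ := 1) hbdd (s := 1 / 2) (by norm_num)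
  · exact alphaBar2_le_alphaBar1_of_one_lt hκ1 hI_nonneg hbdd

/-- The inequality of Theorem 3: `ᾱ₂ ≤ ᾱ₁` for every `κ > 0` and every nonnegative
concave continuous function `I` on `(0,1)`. -/
theorem stmt2 (κ : ℝ) (hκ : 0 < κ) (I : ℝ → ℝ)
    (hI_concave : ConcaveOn ℝ (Ioo 0 1) I)
    (hI_cont : ContinuousOn I (Ioo 0 1))
    (hI_nonneg : ∀ s ∈ Ioo (0 : ℝ) 1, 0 ≤ I s) :
    alphaBar2 κ I ≤ alphaBar1 κ I :=
  stmt2_general κ hκ I hI_concave hI_nonneg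
end

section
/- Let κ > 0 and let I : (0,1) → [0,∞) be a concave continuous function. Define ᾱ_1 := 2^κ · sup_{0<s<1} I(s), and ᾱ_2 := sup_{0<s<1} [I(s)/(s(1−s))]·(s^{1/(κ−1)}+(1−s)^{1/(κ−1)})^{κ−1} if κ < 1; ᾱ_2 := 2·I(1/2) if κ = 1; ᾱ_2 := inf_{0<s<1} [I(s)/(s(1−s))]·(s^{1/(κ−1)}+(1−s)^{1/(κ−1)})^{κ−1} if κ > 1. Then ᾱ_1 = ᾱ_2 if and only if both ᾱ_1 = 2^κ · I(1/2) and ᾱ_2 = 2^κ · I(1/2) hold. Moreover, when κ ≤ 1, ᾱ_1 = ᾱ_2 if and only if ᾱ_1 = 2^κ · I(1/2), i.e. if and only if sup_{0<s<1} I(s) = I(1/2). -/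
open Set

open Real

/-!
For `κ ≠ 1`, `ᾱ₂` is the supremum or infimum of `F s = I s / (s (1 - s)) * w s`, where
`w s = (s^p + (1-s)^p)^(1/p)` with `p = 1/(κ-1)` (`weight κ s` below). Concavity and `I ≥ 0` give
`I ≤ 2 I(1/2)`, so every supremum is finite, and `F (1/2) = 2^κ I(1/2) ≤ ᾱ₁`. For `κ > 1` this
gives `ᾱ₂ ≤ F (1/2) ≤ ᾱ₁`, and for `κ = 1` the claim is immediate. For `κ < 1` the power mean
`w` is dominated by the harmonic mean, `w s ≤ 2^κ s (1 - s)` with equality only at `s = 1/2`,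
hence `2^κ I(1/2) ≤ ᾱ₂ ≤ ᾱ₁`. If `sup I > I(1/2)`, continuity of `I` keeps `F` below
`2^κ sup I` near `1/2`, while compactness (together with `w s ≤ min s (1 - s)` near the endpoints)
keeps `w s / (s (1 - s))` uniformly below `2^κ` away from `1/2`; so `ᾱ₂ < ᾱ₁`.
-/

lemma IsCompact.exists_lt_forall_le_of_forall_lt {α β : Type*} [LinearOrder α]
    [TopologicalSpace α] [ClosedIciTopology α] [NoMinOrder α] [TopologicalSpace β] {K : Set β}
    (hK : IsCompact K) {f : β → α} (hf : ContinuousOn f K) {y : α} (hfy : ∀ x ∈ K, f x < y) :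
    ∃ η < y, ∀ x ∈ K, f x ≤ η := by
  rcases K.eq_empty_or_nonempty with rfl | hne
  · obtain ⟨η, hη⟩ := exists_lt y
    exact ⟨η, hη, fun x hx => hx.elim⟩
  · obtain ⟨x₀, hx₀, hmax⟩ := hK.exists_isMaxOn hne hf
    exact ⟨f x₀, hfy x₀ hx₀, hmax⟩

lemma ConcaveOn.le_two_mul_midpoint {s : Set ℝ} {f : ℝ → ℝ} (hf : ConcaveOn ℝ s f) {x y : ℝ}
    (hx : x ∈ s) (hy : y ∈ s) (hfy : 0 ≤ f y) : f x ≤ 2 * f ((x + y) / 2) := by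
  have h := hf.2 hx hy (by norm_num : (0 : ℝ) ≤ 1 / 2) (by norm_num : (0 : ℝ) ≤ 1 / 2)
    (by norm_num)
  simp only [smul_eq_mul] at h
  rw [show 1 / 2 * x + 1 / 2 * y = (x + y) / 2 by ring] at h
  linarith

noncomputable def weight (κ s : ℝ) : ℝ :=
  (s ^ (1 / (κ - 1)) + (1 - s) ^ (1 / (κ - 1))) ^ (κ - 1)

section weight
variable {κ s : ℝ}

lemma weight_one_sub : weight κ (1 - s) = weight κ s := by
  rw [weight, weight, sub_sub_cancel, add_comm]

lemma weight_nonneg (hs : s ∈ Ioo 0 1) : 0 ≤ weight κ s :=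
  rpow_nonneg (add_nonneg (rpow_nonneg hs.1.le _) (rpow_nonneg (sub_nonneg.2 hs.2.le) _)) _

lemma weight_half (hκ : κ ≠ 1) : weight κ (1 / 2) = 2 ^ κ * (1 / 2 * (1 - 1 / 2)) := by
  have hhalf : (0 : ℝ) ≤ 1 / 2 := by norm_num
  rw [weight, show (1 : ℝ) - 1 / 2 = 1 / 2 by norm_num, ← two_mul,
    mul_rpow zero_le_two (rpow_nonneg hhalf _), ← rpow_mul hhalf,
    one_div_mul_cancel (sub_ne_zero.2 hκ), rpow_one, rpow_sub_one two_ne_zero]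
  ring

lemma weight_le_self (hκ1 : κ < 1) (hs : s ∈ Ioo 0 1) : weight κ s ≤ s := by
  calc weight κ s ≤ (s ^ (1 / (κ - 1))) ^ (κ - 1) :=
        rpow_le_rpow_of_nonpos (rpow_pos_of_pos hs.1 _)
          (le_add_of_nonneg_right (rpow_nonneg (sub_nonneg.2 hs.2.le) _)) (by linarith)
    _ = s := by rw [← rpow_mul hs.1.le, one_div_mul_cancel (by linarith), rpow_one]

lemma weight_le_one_sub (hκ1 : κ < 1) (hs : s ∈ Ioo 0 1) : weight κ s ≤ 1 - s := by
  rw [← weight_one_sub]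
  exact weight_le_self hκ1 ⟨by linarith [hs.2], by linarith [hs.1]⟩

/-- With `u = s ^ (1/(κ-1))`, `v = (1-s) ^ (1/(κ-1))` and `q = 1 - κ ∈ (0, 1)`, we have
`u ^ q = 1/s` and `v ^ q = 1/(1-s)`: this is strict concavity of `x ↦ x ^ q` at the midpoint of
`u` and `v`. -/
lemma weight_lt_of_ne_half (hκ0 : 0 < κ) (hκ1 : κ < 1) (hs : s ∈ Ioo 0 1) (hne : s ≠ 1 / 2) :
    weight κ s < 2 ^ κ * (s * (1 - s)) := by
  obtain ⟨hs0, hs1⟩ := hs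
  have h1s : 0 < 1 - s := by linarith
  set a := 1 / (κ - 1)
  set u := s ^ a
  set v := (1 - s) ^ a
  have hu : 0 < u := rpow_pos_of_pos hs0 a
  have hv : 0 < v := rpow_pos_of_pos h1s a
  have ha : a * (κ - 1) = 1 := one_div_mul_cancel (by linarith)
  have huv : u ≠ v := by
    intro h
    have := congrArg (· ^ (κ - 1)) h
    simp only [u, v, ← rpow_mul hs0.le, ← rpow_mul h1s.le, ha, rpow_one] at this
    exact hne (by linarith)
  have hpow {x : ℝ} (hx : 0 < x) : (x ^ a) ^ (1 - κ) = x⁻¹ := by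
    rw [← rpow_mul hx.le, show a * (1 - κ) = -1 by linear_combination -ha, rpow_neg_one]
  have hconc := (strictConcaveOn_rpow (by linarith : 0 < 1 - κ) (by linarith)).2
    hu.le hv.le huv (by norm_num : (0 : ℝ) < 1 / 2) (by norm_num : (0 : ℝ) < 1 / 2) (by norm_num)
  have huq : u ^ (1 - κ) = s⁻¹ := hpow hs0
  have hvq : v ^ (1 - κ) = (1 - s)⁻¹ := hpow h1s
  simp only [smul_eq_mul, huq, hvq] at hconc
  have hm : 0 < 1 / 2 * u + 1 / 2 * v := by positivity
  have hmid : (1 / 2 * u + 1 / 2 * v) ^ (κ - 1) < 2 * (s * (1 - s)) := by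
    rw [show κ - 1 = -(1 - κ) by ring, rpow_neg hm.le]
    refine (inv_lt_comm₀ (rpow_pos_of_pos hm _) (by positivity)).2 ?_
    convert hconc using 1
    field_simp
    ring
  calc weight κ s = 2 ^ (κ - 1) * (1 / 2 * u + 1 / 2 * v) ^ (κ - 1) := by
        rw [← mul_rpow zero_le_two hm.le]
        show (u + v) ^ (κ - 1) = _
        ring_nf
    _ < 2 ^ (κ - 1) * (2 * (s * (1 - s))) := by gcongr
    _ = 2 ^ κ * (s * (1 - s)) := by rw [rpow_sub_one two_ne_zero]; ring

lemma weight_le (hκ0 : 0 < κ) (hκ1 : κ < 1) (hs : s ∈ Ioo 0 1) :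
    weight κ s ≤ 2 ^ κ * (s * (1 - s)) := by
  rcases eq_or_ne s (1 / 2) with rfl | hne
  · exact (weight_half hκ1.ne).le
  · exact (weight_lt_of_ne_half hκ0 hκ1 hs hne).le

lemma continuousOn_weight : ContinuousOn (weight κ) (Ioo 0 1) := by
  have h1s : ∀ s ∈ Ioo (0 : ℝ) 1, 0 < 1 - s := fun s hs => by linarith [hs.2]
  refine ContinuousOn.rpow_const ?_ fun s hs => Or.inl ?_
  · exact (continuousOn_id.rpow_const fun s hs => Or.inl hs.1.ne').add
      ((continuousOn_const.sub continuousOn_id).rpow_const fun s hs => Or.inl (h1s s hs).ne')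
  · exact (add_pos (rpow_pos_of_pos hs.1 _) (rpow_pos_of_pos (h1s s hs) _)).ne'

lemma exists_weight_le_of_le_abs_sub_half {δ : ℝ} (hκ0 : 0 < κ) (hκ1 : κ < 1) (hδ : 0 < δ) :
    ∃ η ∈ Ico 0 (2 ^ κ), ∀ s ∈ Ioo (0 : ℝ) 1, δ ≤ |s - 1 / 2| →
      weight κ s ≤ η * (s * (1 - s)) := by
  obtain ⟨X, hκX, hX1⟩ : ∃ X, (2 : ℝ) ^ (-κ) < X ∧ X < 1 :=
    exists_between (rpow_lt_one_of_one_lt_of_neg one_lt_two (by linarith))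
  have hX0 : 0 < X := (rpow_pos_of_pos two_pos _).trans hκX
  have hXκ : 1 / X < 2 ^ κ := by
    rw [div_lt_iff₀ hX0, ← div_lt_iff₀' (rpow_pos_of_pos two_pos _), one_div,
      ← rpow_neg zero_le_two]
    exact hκX
  set K := Icc (1 - X) X ∩ {s | δ ≤ |s - 1 / 2|}
  have hKsub : K ⊆ Ioo 0 1 := fun s hs => ⟨by linarith [hs.1.1], by linarith [hs.1.2]⟩
  have hK : IsCompact K :=
    isCompact_Icc.inter_right (isClosed_le continuous_const (by fun_prop))
  have hpos : ∀ s ∈ K, 0 < s * (1 - s) := fun s hs =>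
    mul_pos (hKsub hs).1 (sub_pos.2 (hKsub hs).2)
  obtain ⟨η, hη, hηK⟩ := hK.exists_lt_forall_le_of_forall_lt
    (f := fun s => weight κ s / (s * (1 - s)))
    ((continuousOn_weight.mono hKsub).div (by fun_prop) fun s hs => (hpos s hs).ne')
    fun s hs => (div_lt_iff₀ (hpos s hs)).2 <| weight_lt_of_ne_half hκ0 hκ1 (hKsub hs) fun h =>
      by simp [K, h] at hs; linarith
  refine ⟨max η (1 / X), ⟨le_max_of_le_right (by positivity), max_lt hη hXκ⟩,
    fun s hs hδs => ?_⟩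
  have h1s : 0 < 1 - s := sub_pos.2 hs.2
  have hsp : 0 < s * (1 - s) := mul_pos hs.1 h1s
  by_cases hsK : s ∈ Icc (1 - X) X
  · calc weight κ s ≤ η * (s * (1 - s)) :=
          (div_le_iff₀ (hpos s ⟨hsK, hδs⟩)).1 (hηK s ⟨hsK, hδs⟩)
      _ ≤ max η (1 / X) * (s * (1 - s)) := by gcongr; exact le_max_left η (1 / X)
  · refine le_trans ?_ (mul_le_mul_of_nonneg_right (le_max_right η _) hsp.le)
    rcases not_and_or.1 hsK with hs' | hs'
    · calc weight κ s ≤ s := weight_le_self hκ1 hs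
        _ ≤ (1 - s) / X * s := le_mul_of_one_le_left hs.1.le <| (one_le_div hX0).2 (by linarith)
        _ = 1 / X * (s * (1 - s)) := by ring
    · calc weight κ s ≤ 1 - s := weight_le_one_sub hκ1 hs
        _ ≤ s / X * (1 - s) := le_mul_of_one_le_left h1s.le <| (one_le_div hX0).2 (by linarith)
        _ = 1 / X * (s * (1 - s)) := by ring

lemma div_mul_weight_le {y η : ℝ} (hs : s ∈ Ioo 0 1) (hy : 0 ≤ y)
    (h : weight κ s ≤ η * (s * (1 - s))) : y / (s * (1 - s)) * weight κ s ≤ η * y := by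
  have hsp : 0 < s * (1 - s) := mul_pos hs.1 (sub_pos.2 hs.2)
  calc y / (s * (1 - s)) * weight κ s ≤ y / (s * (1 - s)) * (η * (s * (1 - s))) := by gcongr
    _ = η * y := by rw [mul_left_comm, div_mul_cancel₀ _ hsp.ne']

lemma div_mul_weight_half (hκ : κ ≠ 1) (y : ℝ) :
    y / (1 / 2 * (1 - 1 / 2)) * weight κ (1 / 2) = 2 ^ κ * y := by
  rw [weight_half hκ]
  field_simp

end weight

lemma one_half_mem_Ioo : (1 / 2 : ℝ) ∈ Ioo 0 1 := ⟨by norm_num, by norm_num⟩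

instance : Nonempty (Ioo (0 : ℝ) 1) := ⟨⟨1 / 2, one_half_mem_Ioo⟩⟩

lemma alphaBar1_eq_two_rpow_mul_half_iff (κ : ℝ) (I : ℝ → ℝ) :
    alphaBar1 κ I = 2 ^ κ * I (1 / 2) ↔ ⨆ s : Ioo (0 : ℝ) 1, I s = I (1 / 2) :=
  mul_right_inj' (rpow_pos_of_pos two_pos κ).ne'

lemma alphaBar2_one (I : ℝ → ℝ) : alphaBar2 1 I = 2 * I (1 / 2) := by
  simp [alphaBar2]

section concave

variable {κ : ℝ} {I : ℝ → ℝ} (hI_concave : ConcaveOn ℝ (Ioo 0 1) I)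
  (hI_nonneg : ∀ s ∈ Ioo (0 : ℝ) 1, 0 ≤ I s)
include hI_concave hI_nonneg

lemma le_two_mul_half_of_concaveOn {s : ℝ} (hs : s ∈ Ioo (0 : ℝ) 1) : I s ≤ 2 * I (1 / 2) := by
  have hs' : 1 - s ∈ Ioo (0 : ℝ) 1 := ⟨sub_pos.2 hs.2, by linarith [hs.1]⟩
  simpa using hI_concave.le_two_mul_midpoint hs hs' (hI_nonneg _ hs')

lemma bddAbove_range_Ioo_of_concaveOn : BddAbove (range fun s : Ioo (0 : ℝ) 1 => I s) :=
  ⟨2 * I (1 / 2), forall_mem_range.2 fun s =>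
    le_two_mul_half_of_concaveOn hI_concave hI_nonneg s.2⟩

lemma le_iSup_Ioo_half : I (1 / 2) ≤ ⨆ s : Ioo (0 : ℝ) 1, I s :=
  le_ciSup (bddAbove_range_Ioo_of_concaveOn hI_concave hI_nonneg) ⟨1 / 2, one_half_mem_Ioo⟩

lemma div_mul_weight_le_alphaBar1 (hκ0 : 0 < κ) (hκ1 : κ < 1) (s : Ioo (0 : ℝ) 1) :
    I s / (s * (1 - s)) * weight κ s ≤ alphaBar1 κ I :=
  (div_mul_weight_le s.2 (hI_nonneg s s.2) (weight_le hκ0 hκ1 s.2)).trans <|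
    mul_le_mul_of_nonneg_left (le_ciSup (bddAbove_range_Ioo_of_concaveOn hI_concave hI_nonneg) s)
      (rpow_pos_of_pos two_pos κ).le

lemma alphaBar2_le_alphaBar1 (hκ0 : 0 < κ) (hκ1 : κ < 1) : alphaBar2 κ I ≤ alphaBar1 κ I := by
  rw [alphaBar2, if_pos hκ1]
  exact ciSup_le (div_mul_weight_le_alphaBar1 hI_concave hI_nonneg hκ0 hκ1)

lemma two_rpow_mul_half_le_alphaBar2 (hκ0 : 0 < κ) (hκ1 : κ < 1) :
    2 ^ κ * I (1 / 2) ≤ alphaBar2 κ I := by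
  rw [alphaBar2, if_pos hκ1, ← div_mul_weight_half hκ1.ne]
  exact le_ciSup (f := fun s : Ioo (0 : ℝ) 1 => I s / (s * (1 - s)) * weight κ s)
    ⟨_, forall_mem_range.2 (div_mul_weight_le_alphaBar1 hI_concave hI_nonneg hκ0 hκ1)⟩
    ⟨1 / 2, one_half_mem_Ioo⟩

lemma alphaBar2_eq_of_iSup_eq_half (hκ0 : 0 < κ) (hκ1 : κ < 1)
    (h : ⨆ s : Ioo (0 : ℝ) 1, I s = I (1 / 2)) : alphaBar2 κ I = 2 ^ κ * I (1 / 2) :=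
  le_antisymm
    ((alphaBar2_le_alphaBar1 hI_concave hI_nonneg hκ0 hκ1).trans_eq (by rw [alphaBar1, h]))
    (two_rpow_mul_half_le_alphaBar2 hI_concave hI_nonneg hκ0 hκ1)

lemma iSup_eq_half_of_alphaBar2_eq_alphaBar1 (hI_cont : ContinuousOn I (Ioo 0 1))
    (hκ0 : 0 < κ) (hκ1 : κ < 1) (h : alphaBar2 κ I = alphaBar1 κ I) :
    ⨆ s : Ioo (0 : ℝ) 1, I s = I (1 / 2) := by
  set M := ⨆ s : Ioo (0 : ℝ) 1, I s
  set c := I (1 / 2)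
  by_contra hne
  have hcM : c < M := (le_iSup_Ioo_half hI_concave hI_nonneg).lt_of_ne' hne
  have hM0 : 0 < M := (hI_nonneg _ one_half_mem_Ioo).trans_lt hcM
  obtain ⟨δ, hδ, hnear⟩ := Metric.continuousAt_iff.1
    (hI_cont.continuousAt (isOpen_Ioo.mem_nhds one_half_mem_Ioo)) ((M - c) / 2) (by linarith)
  obtain ⟨η, ⟨hη0, hηκ⟩, hfar⟩ := exists_weight_le_of_le_abs_sub_half hκ0 hκ1 hδ
  have hbound : ∀ s : Ioo (0 : ℝ) 1,
      I s / (s * (1 - s)) * weight κ s ≤ max (2 ^ κ * ((M + c) / 2)) (η * M) := by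
    intro s
    have hIM : I s ≤ M := le_ciSup (bddAbove_range_Ioo_of_concaveOn hI_concave hI_nonneg) s
    by_cases hs : |(s : ℝ) - 1 / 2| < δ
    · have hIs : I s < (M + c) / 2 := by
        have := (abs_lt.1 (hnear (x := s) hs)).2
        linarith
      refine le_max_of_le_left <| (div_mul_weight_le s.2 (hI_nonneg s s.2)
        (weight_le hκ0 hκ1 s.2)).trans ?_
      gcongr
    · refine le_max_of_le_right <| (div_mul_weight_le s.2 (hI_nonneg s s.2)
        (hfar s s.2 (not_lt.1 hs))).trans ?_
      gcongr
  have hlt : max (2 ^ κ * ((M + c) / 2)) (η * M) < 2 ^ κ * M :=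
    max_lt (by gcongr; linarith) (by gcongr)
  rw [alphaBar2, if_pos hκ1, alphaBar1] at h
  exact lt_irrefl _ ((ciSup_le hbound).trans_lt (hlt.trans_eq h.symm))

end concave

lemma alphaBar2_le_two_rpow_mul_half {κ : ℝ} {I : ℝ → ℝ} (hκ1 : 1 < κ)
    (hI_nonneg : ∀ s ∈ Ioo (0 : ℝ) 1, 0 ≤ I s) : alphaBar2 κ I ≤ 2 ^ κ * I (1 / 2) := by
  rw [alphaBar2, if_neg (lt_asymm hκ1), if_neg hκ1.ne', ← div_mul_weight_half hκ1.ne']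
  refine ciInf_le (f := fun s : Ioo (0 : ℝ) 1 => I s / (s * (1 - s)) * weight κ s)
    ⟨0, forall_mem_range.2 fun s => ?_⟩ ⟨1 / 2, one_half_mem_Ioo⟩
  exact mul_nonneg (div_nonneg (hI_nonneg s s.2) (mul_pos s.2.1 (sub_pos.2 s.2.2)).le)
    (weight_nonneg s.2)

/-- The equality characterization of Theorem 3: `ᾱ₁ = ᾱ₂` iff both `ᾱ₁ = 2^κ I(1/2)` and
`ᾱ₂ = 2^κ I(1/2)`; and when `κ ≤ 1`, `ᾱ₁ = ᾱ₂` iff `ᾱ₁ = 2^κ I(1/2)` iff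
`sup_{0<s<1} I(s) = I(1/2)`. -/
theorem stmt3 (κ : ℝ) (hκ : 0 < κ) (I : ℝ → ℝ)
    (hI_concave : ConcaveOn ℝ (Ioo 0 1) I)
    (hI_cont : ContinuousOn I (Ioo 0 1))
    (hI_nonneg : ∀ s ∈ Ioo (0 : ℝ) 1, 0 ≤ I s) :
    (alphaBar1 κ I = alphaBar2 κ I ↔
      (alphaBar1 κ I = 2 ^ κ * I (1 / 2) ∧ alphaBar2 κ I = 2 ^ κ * I (1 / 2))) ∧
    (κ ≤ 1 →
      ((alphaBar1 κ I = alphaBar2 κ I ↔ alphaBar1 κ I = 2 ^ κ * I (1 / 2)) ∧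
       (alphaBar1 κ I = 2 ^ κ * I (1 / 2) ↔ (⨆ s : Ioo (0 : ℝ) 1, I s) = I (1 / 2)))) := by
  have hA := alphaBar1_eq_two_rpow_mul_half_iff κ I
  rcases lt_trichotomy κ 1 with hκ1 | rfl | hκ1
  · have hB := alphaBar2_eq_of_iSup_eq_half hI_concave hI_nonneg hκ hκ1
    have key : alphaBar1 κ I = alphaBar2 κ I ↔ ⨆ s : Ioo (0 : ℝ) 1, I s = I (1 / 2) :=
      ⟨fun h => iSup_eq_half_of_alphaBar2_eq_alphaBar1 hI_concave hI_nonneg hI_cont hκ hκ1 h.symm,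
        fun h => (hA.2 h).trans (hB h).symm⟩
    exact ⟨⟨fun h => ⟨hA.2 (key.1 h), hB (key.1 h)⟩, fun h => h.1.trans h.2.symm⟩,
      fun _ => ⟨key.trans hA.symm, hA⟩⟩
  · rw [rpow_one] at hA
    rw [alphaBar2_one, rpow_one]
    exact ⟨⟨fun h => ⟨h, rfl⟩, And.left⟩, fun _ => ⟨Iff.rfl, hA⟩⟩
  · have hxA : 2 ^ κ * I (1 / 2) ≤ alphaBar1 κ I :=
      mul_le_mul_of_nonneg_left (le_iSup_Ioo_half hI_concave hI_nonneg) (by positivity)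
    have hAx (h : alphaBar1 κ I = alphaBar2 κ I) : alphaBar1 κ I = 2 ^ κ * I (1 / 2) :=
      le_antisymm (h.trans_le (alphaBar2_le_two_rpow_mul_half hκ1 hI_nonneg)) hxA
    exact ⟨⟨fun h => ⟨hAx h, h ▸ hAx h⟩, fun h => h.1.trans h.2.symm⟩,
      fun h => absurd h (not_le.2 hκ1)⟩
end

section
/- For every κ with 0 < κ < 1 and every s ∈ (0,1), the inequality (1/(s(1−s)))·(s^{1/(κ−1)} + (1−s)^{1/(κ−1)})^{κ−1} ≤ 2^κ holds, with equality if and only if s = 1/2. -/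
open Set Real

/-
With `q = 1/(κ-1) < -1`, `p = -q > 1` and
`t = 1 - s` one has `s^q + t^q = (s^p + t^p) (s t)^q`, and since
`q (κ-1) = 1` the left-hand side collapses to `(s^p + (1-s)^p)^(κ-1)`. Strict convexity of `x ↦ x^p`
gives `s^p + (1-s)^p ≥ 2 (1/2)^p`, with equality only at `s = 1/2`; as `κ - 1 < 0`, raising to the
power `κ - 1` reverses this, and `(2 (1/2)^p)^(κ-1) = 2^κ`.
-/

lemma one_div_mul_rpow_add_rpow_rpow {s t q e : ℝ} (hs : 0 < s) (ht : 0 < t) (hqe : q * e = 1) :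
    1 / (s * t) * (s ^ q + t ^ q) ^ e = (s ^ (-q) + t ^ (-q)) ^ e := by
  have hsum : s ^ q + t ^ q = (s ^ (-q) + t ^ (-q)) * (s * t) ^ q := by
    rw [mul_rpow hs.le ht.le, rpow_neg hs.le, rpow_neg ht.le]
    have := (rpow_pos_of_pos hs q).ne'
    have := (rpow_pos_of_pos ht q).ne'
    field_simp
    ring
  rw [hsum, mul_rpow (by positivity) (by positivity), ← rpow_mul (by positivity), hqe, rpow_one]
  field_simp

lemma two_mul_midpoint_rpow_le_rpow_add_rpow {p a b : ℝ} (hp : 1 ≤ p) (ha : 0 ≤ a)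
    (hb : 0 ≤ b) : 2 * ((a + b) / 2) ^ p ≤ a ^ p + b ^ p := by
  have h := (convexOn_rpow hp).2 (mem_Ici.2 ha) (mem_Ici.2 hb) (by norm_num : (0 : ℝ) ≤ 1 / 2)
    (by norm_num : (0 : ℝ) ≤ 1 / 2) (by norm_num)
  simp only [smul_eq_mul, one_div_mul_eq_div, ← add_div] at h
  linarith

lemma two_mul_midpoint_rpow_lt_rpow_add_rpow {p a b : ℝ} (hp : 1 < p) (ha : 0 ≤ a)
    (hb : 0 ≤ b) (hab : a ≠ b) : 2 * ((a + b) / 2) ^ p < a ^ p + b ^ p := by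
  have h := (strictConvexOn_rpow hp).2 (mem_Ici.2 ha) (mem_Ici.2 hb) hab
    (by norm_num : (0 : ℝ) < 1 / 2) (by norm_num : (0 : ℝ) < 1 / 2) (by norm_num)
  simp only [smul_eq_mul, one_div_mul_eq_div, ← add_div] at h
  linarith

lemma rpow_add_rpow_eq_two_mul_midpoint_rpow_iff {p a b : ℝ} (hp : 1 < p) (ha : 0 ≤ a)
    (hb : 0 ≤ b) : a ^ p + b ^ p = 2 * ((a + b) / 2) ^ p ↔ a = b := by
  refine ⟨fun h ↦ ?_, fun h ↦ by subst h; ring_nf⟩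
  by_contra hab
  exact (two_mul_midpoint_rpow_lt_rpow_add_rpow hp ha hb hab).ne' h

/-- Inequality (18.9) of the paper: for `0 < κ < 1` and `s ∈ (0,1)`,
`(1/(s(1-s))) ⬝ (s^{1/(κ-1)} + (1-s)^{1/(κ-1)})^{κ-1} ≤ 2^κ`,
with equality if and only if `s = 1/2`. -/
theorem stmt4 (κ s : ℝ) (hκ0 : 0 < κ) (hκ1 : κ < 1) (hs : s ∈ Ioo (0 : ℝ) 1) :
    1 / (s * (1 - s)) * (s ^ (1 / (κ - 1)) + (1 - s) ^ (1 / (κ - 1))) ^ (κ - 1) ≤ 2 ^ κ ∧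
    (1 / (s * (1 - s)) * (s ^ (1 / (κ - 1)) + (1 - s) ^ (1 / (κ - 1))) ^ (κ - 1) = 2 ^ κ ↔
      s = 1 / 2) := by
  obtain ⟨hs0, hs1⟩ := hs
  have he : κ - 1 < 0 := by linarith
  have hqe : 1 / (κ - 1) * (κ - 1) = 1 := one_div_mul_cancel he.ne
  have hp : 1 < -(1 / (κ - 1)) := by
    rw [one_div, ← inv_neg, one_lt_inv₀ (by linarith)]; linarith
  have htwo : (2 : ℝ) ^ κ = (2 * ((s + (1 - s)) / 2) ^ (-(1 / (κ - 1)))) ^ (κ - 1) := by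
    rw [add_sub_cancel, div_rpow zero_le_one zero_le_two, one_rpow, mul_one_div,
      ← rpow_one_sub' zero_le_two (by linarith), ← rpow_mul zero_le_two, sub_mul, neg_mul, hqe]
    ring_nf
  rw [one_div_mul_rpow_add_rpow_rpow hs0 (sub_pos.2 hs1) hqe, htwo,
    rpow_le_rpow_iff_of_neg (by positivity) (by positivity) he,
    rpow_left_inj (by positivity) (by positivity) he.ne,
    rpow_add_rpow_eq_two_mul_midpoint_rpow_iff hp hs0.le (sub_pos.2 hs1).le]
  exact ⟨two_mul_midpoint_rpow_le_rpow_add_rpow hp.le hs0.le (sub_pos.2 hs1).le,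
    by constructor <;> intro h <;> linarith⟩
end

section
/- Let f : (0,1) → [0,∞) be a concave function. Then for every s ∈ (0,1), inf_{x ≥ 0} [ s·x + (1−s)·sup_{0<t<1} (−t·x + f(t))/(1−t) ] = inf_{x > 0} sup_{0<t<1} [ ((s−t)·x + (1−s)·f(t))/(1−t) ] = f(s). -/
open Set Filter

/-!
Take a supporting line `L t = f s + c (t - s)` of `f` at `s`. Using `f t ≤ L t`,
`((s - t) x + (1 - s) f t) / (1 - t) ≤ f s + (s - t) (x - L 1) / (1 - t)`, so `x = L 1` bounds
every term by `f s`, while `t = s` gives exactly `f s` for every `x`. Since `L ≥ f ≥ 0` on `(0,1)`,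
`L 1 ≥ 0`; if `L 1 = 0`, the positive choices `x = L 1 + δ` cost at most `δ`. The first infimum
reduces to the second by moving `s x + (1 - s) *` inside the supremum.
-/

theorem ConcaveOn.exists_le_add_mul_sub {S : Set ℝ} {f : ℝ → ℝ} (hf : ConcaveOn ℝ S f) {s : ℝ}
    (hs : s ∈ interior S) : ∃ c : ℝ, ∀ t ∈ S, f t ≤ f s + c * (t - s) := by
  have hg : ConvexOn ℝ S (-f) := hf.neg
  refine ⟨-derivWithin (-f) (Ioi s) s, fun t ht => ?_⟩
  rcases lt_trichotomy t s with hts | rfl | hst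
  · have h := (hg.slope_le_leftDeriv_of_mem_interior ht hs hts).trans
      (hg.leftDeriv_le_rightDeriv_of_mem_interior hs)
    rw [slope_def_field, div_le_iff₀ (sub_pos.2 hts)] at h
    simp only [Pi.neg_apply] at h
    linarith
  · simp
  · have h := hg.rightDeriv_le_slope_of_mem_interior hs ht hst
    rw [slope_def_field, le_div_iff₀ (sub_pos.2 hst)] at h
    simp only [Pi.neg_apply] at h
    linarith

theorem nonneg_of_forall_mem_Ioo_nonneg {g : ℝ → ℝ} {a b : ℝ} (hab : a < b)
    (hg : ContinuousWithinAt g (Iio b) b) (h : ∀ t ∈ Ioo a b, 0 ≤ g t) : 0 ≤ g b :=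
  ge_of_tendsto hg (eventually_of_mem (Ioo_mem_nhdsLT hab) h)

theorem EReal.coe_add_coe_mul_iSup {ι : Sort*} [Nonempty ι] {a b : ℝ} (hb : 0 < b) (φ : ι → ℝ) :
    (a : EReal) + b * ⨆ i, (φ i : EReal) = ⨆ i, ((a + b * φ i : ℝ) : EReal) := by
  have hb' : (0 : EReal) ≤ b := EReal.coe_nonneg.2 hb.le
  refine le_antisymm ?_ (iSup_le fun i => ?_)
  · induction h : ⨆ i, ((a + b * φ i : ℝ) : EReal) using EReal.rec with
    | bot =>
      exact absurd (le_bot_iff.1 (h ▸ le_iSup (fun i => ((a + b * φ i : ℝ) : EReal))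
        (Classical.arbitrary ι))) (EReal.coe_ne_bot _)
    | top => exact le_top
    | coe r =>
      have hφ : ⨆ i, (φ i : EReal) ≤ ((r - a) / b : ℝ) := iSup_le fun i => by
        have := h ▸ le_iSup (fun i => ((a + b * φ i : ℝ) : EReal)) i
        rw [EReal.coe_le_coe_iff, le_div_iff₀ hb] at *
        linarith
      calc (a : EReal) + b * ⨆ i, (φ i : EReal) ≤ a + b * ((r - a) / b : ℝ) := by gcongr
        _ = r := by norm_cast; field_simp; ring
  · rw [EReal.coe_add, EReal.coe_mul]
    gcongr
    exact le_iSup (fun i => (φ i : EReal)) i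

section SupportingLine

variable {f : ℝ → ℝ} {s : ℝ}

theorem le_iSup_div_one_sub (hs : s ∈ Ioo (0 : ℝ) 1) (x : ℝ) :
    (f s : EReal) ≤ ⨆ t : Ioo (0 : ℝ) 1, ((((s - t) * x + (1 - s) * f t) / (1 - t) : ℝ) : EReal) :=
  le_iSup_of_le ⟨s, hs⟩ <| EReal.coe_le_coe_iff.2 <| by
    rw [sub_self, zero_mul, zero_add, mul_div_cancel_left₀ _ (sub_pos.2 hs.2).ne']

theorem iSup_div_one_sub_le {c : ℝ} (hc : ∀ t ∈ Ioo (0 : ℝ) 1, f t ≤ f s + c * (t - s))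
    (hs : s < 1) {δ : ℝ} (hδ : 0 ≤ δ) :
    ⨆ t : Ioo (0 : ℝ) 1,
        ((((s - t) * (f s + c * (1 - s) + δ) + (1 - s) * f t) / (1 - t) : ℝ) : EReal) ≤
      ((f s + δ : ℝ) : EReal) := by
  refine iSup_le fun ⟨t, ht⟩ => EReal.coe_le_coe_iff.2 ?_
  rw [div_le_iff₀ (sub_pos.2 ht.2)]
  nlinarith [mul_le_mul_of_nonneg_left (hc t ht) (sub_pos.2 hs).le,
    mul_le_mul_of_nonneg_right (show s - t ≤ 1 - t by linarith) hδ]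

end SupportingLine

/-- The Appendix lemma on concave functions: for a nonnegative concave `f` on `(0,1)` and
`s ∈ (0,1)`,
`inf_{x ≥ 0} [s x + (1-s) sup_{0<t<1} (-t x + f(t))/(1-t)]
  = inf_{x > 0} sup_{0<t<1} ((s-t) x + (1-s) f(t))/(1-t) = f(s)`.
The inner suprema are taken in `EReal` since they may be infinite. -/
theorem stmt7 (f : ℝ → ℝ) (hf_concave : ConcaveOn ℝ (Ioo 0 1) f)
    (hf_nonneg : ∀ t ∈ Ioo (0 : ℝ) 1, 0 ≤ f t) (s : ℝ) (hs : s ∈ Ioo (0 : ℝ) 1) :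
    (⨅ x : {x : ℝ // 0 ≤ x}, (((s * (x : ℝ) : ℝ) : EReal) +
        ((1 - s : ℝ) : EReal) *
          ⨆ t : Ioo (0 : ℝ) 1, (((-(t : ℝ) * (x : ℝ) + f t) / (1 - (t : ℝ)) : ℝ) : EReal)))
      = ((f s : ℝ) : EReal) ∧
    (⨅ x : {x : ℝ // 0 < x}, ⨆ t : Ioo (0 : ℝ) 1,
        ((((s - (t : ℝ)) * (x : ℝ) + (1 - s) * f t) / (1 - (t : ℝ)) : ℝ) : EReal))
      = ((f s : ℝ) : EReal) := by
  obtain ⟨c, hc⟩ := hf_concave.exists_le_add_mul_sub (by rwa [interior_Ioo])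
  have hc_one : 0 ≤ f s + c * (1 - s) :=
    nonneg_of_forall_mem_Ioo_nonneg (g := fun t => f s + c * (t - s)) one_pos
      (by fun_prop : Continuous _).continuousWithinAt fun t ht => (hf_nonneg t ht).trans (hc t ht)
  have : Nonempty (Ioo (0 : ℝ) 1) := ⟨⟨s, hs⟩⟩
  have hcombine (x : ℝ) : ((s * x : ℝ) : EReal) + ((1 - s : ℝ) : EReal) *
        ⨆ t : Ioo (0 : ℝ) 1, (((-(t : ℝ) * x + f t) / (1 - (t : ℝ)) : ℝ) : EReal) =
      ⨆ t : Ioo (0 : ℝ) 1, ((((s - t) * x + (1 - s) * f t) / (1 - t) : ℝ) : EReal) := by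
    rw [EReal.coe_add_coe_mul_iSup (sub_pos.2 hs.2)]
    congr! 2 with ⟨t, ht⟩
    rw [EReal.coe_eq_coe_iff]
    field_simp [(sub_pos.2 ht.2).ne']
    ring
  simp only [hcombine]
  refine ⟨le_antisymm (iInf_le_of_le ⟨_, hc_one⟩ ?_) (le_iInf fun x => le_iSup_div_one_sub hs x),
    le_antisymm (EReal.le_of_forall_lt_iff_le.1 fun z hz => ?_)
      (le_iInf fun x => le_iSup_div_one_sub hs x)⟩
  · simpa using iSup_div_one_sub_le hc hs.2 le_rfl
  · have hz' : f s < z := EReal.coe_lt_coe_iff.1 hz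
    refine iInf_le_of_le ⟨_, add_pos_of_nonneg_of_pos hc_one (sub_pos.2 hz')⟩ ?_
    simpa using iSup_div_one_sub_le hc hs.2 (sub_pos.2 hz').le
end

section
/- Let p and q be probability densities with respect to a σ-finite measure μ, and define I^s(p‖q) := −log ∫ p^s q^{1−s} dμ for 0 < s < 1. Then for every s ∈ (0,1), 2·min{s, 1−s}·I^{1/2}(p‖q) ≤ I^s(p‖q) ≤ 2·max{s, 1−s}·I^{1/2}(p‖q). -/
open MeasureTheory Set ENNReal

/-!
By Hölder's inequality, `H(s) = ∫ p^s q^(1-s) dμ` is log-convex on `[0, 1]`, and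
`H(0) = ∫ q ≤ 1`, `H(1) = ∫ p ≤ 1`. For `s ≤ 1/2`, writing `s` as a convex combination of `0`
and `1/2` gives `H(s) ≤ H(1/2)^(2s)`, and writing `1/2` as one of `s` and `1` gives
`H(1/2) ≤ H(s)^(1/(2(1-s)))`; applying `-log` yields both bounds. The case `s ≥ 1/2` follows by
exchanging `p` and `q`, which replaces `s` by `1 - s`.
-/

/-- `-log x`, with the convention `-log 0 = ∞`, as a map `ℝ≥0∞ → ℝ≥0∞`. -/
noncomputable def negLog (x : ℝ≥0∞) : ℝ≥0∞ :=
  if x = 0 then ⊤ else ENNReal.ofReal (-Real.log x.toReal)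

/-- The relative Rényi entropy `I^s(p‖q) = -log ∫ p^s q^(1-s) dμ` of two densities
`p, q` with respect to `μ`. -/
noncomputable def renyi {Ω : Type*} [MeasurableSpace Ω] (μ : Measure Ω)
    (p q : Ω → ℝ≥0∞) (s : ℝ) : ℝ≥0∞ :=
  negLog (∫⁻ ω, p ω ^ s * q ω ^ (1 - s) ∂μ)

lemma negLog_antitone : Antitone negLog := by
  intro x y hxy
  rcases eq_or_ne x 0 with rfl | hx
  · simp [negLog]
  have hy : y ≠ 0 := ne_bot_of_le_ne_bot hx hxy
  rcases eq_or_ne y ⊤ with rfl | hy_top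
  · simp [negLog]
  have hx_top : x ≠ ⊤ := ne_top_of_le_ne_top hy_top hxy
  simp only [negLog, if_neg hx, if_neg hy]
  gcongr
  exact ENNReal.toReal_pos hx hx_top

lemma negLog_rpow (x : ℝ≥0∞) {c : ℝ} (hc : 0 ≤ c) :
    negLog (x ^ c) = ENNReal.ofReal c * negLog x := by
  rcases hc.eq_or_lt with rfl | hc
  · simp [negLog]
  rcases eq_or_ne x 0 with rfl | hx
  · simp [negLog, ENNReal.zero_rpow_of_pos hc, hc]
  rcases eq_or_ne x ⊤ with rfl | hx_top
  · simp [negLog, hc]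
  have hxc : x ^ c ≠ 0 := (ENNReal.rpow_pos (pos_iff_ne_zero.mpr hx) hx_top).ne'
  rw [negLog, negLog, if_neg hxc, if_neg hx, ← ENNReal.toReal_rpow,
    Real.log_rpow (ENNReal.toReal_pos hx hx_top), ← ENNReal.ofReal_mul hc.le, mul_neg]

lemma rpow_mul_rpow_one_sub_interpolate (x y : ℝ≥0∞) {a b t : ℝ} (ha : a ∈ Icc (0 : ℝ) 1)
    (hb : b ∈ Icc (0 : ℝ) 1) (ht : t ∈ Icc (0 : ℝ) 1) :
    (x ^ a * y ^ (1 - a)) ^ t * (x ^ b * y ^ (1 - b)) ^ (1 - t) =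
      x ^ (t * a + (1 - t) * b) * y ^ (1 - (t * a + (1 - t) * b)) := by
  obtain ⟨ha0, ha1⟩ := ha
  obtain ⟨hb0, hb1⟩ := hb
  obtain ⟨ht0, ht1⟩ := ht
  have hexp : 1 - (a * t + b * (1 - t)) = (1 - a) * t + (1 - b) * (1 - t) := by ring
  rw [mul_comm t a, mul_comm (1 - t) b, ENNReal.mul_rpow_of_nonneg _ _ ht0,
    ENNReal.mul_rpow_of_nonneg _ _ (sub_nonneg.mpr ht1),
    ← ENNReal.rpow_mul, ← ENNReal.rpow_mul, ← ENNReal.rpow_mul, ← ENNReal.rpow_mul, hexp,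
    ENNReal.rpow_add_of_nonneg _ _ (by positivity) (by nlinarith),
    ENNReal.rpow_add_of_nonneg _ _ (by nlinarith) (by nlinarith)]
  ring

section

variable {Ω : Type*} [MeasurableSpace Ω]

noncomputable def hellingerIntegral (μ : Measure Ω) (p q : Ω → ℝ≥0∞) (s : ℝ) : ℝ≥0∞ :=
  ∫⁻ ω, p ω ^ s * q ω ^ (1 - s) ∂μ

variable {μ : Measure Ω} {p q : Ω → ℝ≥0∞}

lemma renyi_eq_negLog_hellingerIntegral (s : ℝ) :
    renyi μ p q s = negLog (hellingerIntegral μ p q s) := rfl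

lemma hellingerIntegral_zero : hellingerIntegral μ p q 0 = ∫⁻ ω, q ω ∂μ := by
  simp [hellingerIntegral]

lemma hellingerIntegral_one : hellingerIntegral μ p q 1 = ∫⁻ ω, p ω ∂μ := by
  simp [hellingerIntegral]

lemma renyi_comm (s : ℝ) : renyi μ p q s = renyi μ q p (1 - s) := by
  unfold renyi
  exact congrArg negLog (lintegral_congr fun ω => by rw [_root_.sub_sub_cancel, mul_comm])

lemma hellingerIntegral_le_rpow_mul_rpow (hp : AEMeasurable p μ) (hq : AEMeasurable q μ)
    {a b t : ℝ} (ha : a ∈ Icc (0 : ℝ) 1) (hb : b ∈ Icc (0 : ℝ) 1) (ht : t ∈ Icc (0 : ℝ) 1) :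
    hellingerIntegral μ p q (t * a + (1 - t) * b) ≤
      hellingerIntegral μ p q a ^ t * hellingerIntegral μ p q b ^ (1 - t) := by
  have holder := ENNReal.lintegral_mul_norm_pow_le
    ((hp.pow_const a).mul (hq.pow_const (1 - a))) ((hp.pow_const b).mul (hq.pow_const (1 - b)))
    ht.1 (sub_nonneg.mpr ht.2) (add_sub_cancel t 1)
  simpa only [hellingerIntegral, Pi.mul_apply, rpow_mul_rpow_one_sub_interpolate _ _ ha hb ht]
    using holder

lemma ofReal_two_mul_mul_renyi_half_le (hp : AEMeasurable p μ) (hq : AEMeasurable q μ)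
    (hq_le : ∫⁻ ω, q ω ∂μ ≤ 1) {s : ℝ} (hs₀ : 0 ≤ s) (hs : s ≤ 1 / 2) :
    ENNReal.ofReal (2 * s) * renyi μ p q (1 / 2) ≤ renyi μ p q s := by
  have key : hellingerIntegral μ p q s ≤ hellingerIntegral μ p q (1 / 2) ^ (2 * s) := by
    have h := hellingerIntegral_le_rpow_mul_rpow hp hq (a := 1 / 2) (b := 0) (t := 2 * s)
      ⟨by norm_num, by norm_num⟩ ⟨le_rfl, zero_le_one⟩ ⟨by linarith, by linarith⟩
    rw [hellingerIntegral_zero (μ := μ)] at h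
    calc hellingerIntegral μ p q s
        = hellingerIntegral μ p q (2 * s * (1 / 2) + (1 - 2 * s) * 0) := by ring_nf
      _ ≤ _ := h
      _ ≤ _ := mul_le_of_le_one_right' (ENNReal.rpow_le_one hq_le (by linarith))
  rw [renyi_eq_negLog_hellingerIntegral, renyi_eq_negLog_hellingerIntegral,
    ← negLog_rpow _ (by linarith)]
  exact negLog_antitone key

lemma renyi_le_ofReal_two_mul_one_sub_mul_renyi_half (hp : AEMeasurable p μ)
    (hq : AEMeasurable q μ) (hp_le : ∫⁻ ω, p ω ∂μ ≤ 1) {s : ℝ} (hs₀ : 0 ≤ s) (hs : s ≤ 1 / 2) :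
    renyi μ p q s ≤ ENNReal.ofReal (2 * (1 - s)) * renyi μ p q (1 / 2) := by
  set l := (2 * (1 - s))⁻¹ with hl
  have hl₀ : 0 ≤ l := inv_nonneg.mpr (by linarith)
  have key : hellingerIntegral μ p q (1 / 2) ≤ hellingerIntegral μ p q s ^ l := by
    have h := hellingerIntegral_le_rpow_mul_rpow hp hq (a := s) (b := 1) (t := l)
      ⟨hs₀, by linarith⟩ ⟨zero_le_one, le_rfl⟩ ⟨hl₀, inv_le_one_of_one_le₀ (by linarith)⟩
    rw [hellingerIntegral_one (μ := μ)] at h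
    calc hellingerIntegral μ p q (1 / 2)
        = hellingerIntegral μ p q (l * s + (1 - l) * 1) := by
          have : 1 - s ≠ 0 := by linarith
          congr 1
          rw [hl]
          field_simp
          ring
      _ ≤ _ := h
      _ ≤ _ := mul_le_of_le_one_right' (ENNReal.rpow_le_one hp_le (sub_nonneg.mpr
        (inv_le_one_of_one_le₀ (by linarith))))
  calc renyi μ p q s
      = ENNReal.ofReal (2 * (1 - s)) * (ENNReal.ofReal l * renyi μ p q s) := by
        rw [← mul_assoc, ← ENNReal.ofReal_mul (by linarith), hl, mul_inv_cancel₀ (by linarith),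
          ENNReal.ofReal_one, one_mul]
    _ = ENNReal.ofReal (2 * (1 - s)) * negLog (hellingerIntegral μ p q s ^ l) := by
        rw [negLog_rpow _ hl₀, renyi_eq_negLog_hellingerIntegral]
    _ ≤ ENNReal.ofReal (2 * (1 - s)) * renyi μ p q (1 / 2) := by
        gcongr
        exact negLog_antitone key

end

theorem stmt9_general {Ω : Type*} [MeasurableSpace Ω] (μ : Measure Ω)
    (p q : Ω → ℝ≥0∞) (hp_meas : Measurable p) (hq_meas : Measurable q)
    (hp : ∫⁻ ω, p ω ∂μ = 1) (hq : ∫⁻ ω, q ω ∂μ = 1)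
    (s : ℝ) (hs : s ∈ Ioo (0 : ℝ) 1) :
    ENNReal.ofReal (2 * min s (1 - s)) * renyi μ p q (1 / 2) ≤ renyi μ p q s ∧
    renyi μ p q s ≤ ENNReal.ofReal (2 * max s (1 - s)) * renyi μ p q (1 / 2) := by
  obtain ⟨hs₀, hs₁⟩ := hs
  rcases le_total s (1 / 2) with hs | hs
  · rw [min_eq_left (by linarith), max_eq_right (by linarith)]
    exact ⟨ofReal_two_mul_mul_renyi_half_le hp_meas.aemeasurable hq_meas.aemeasurable hq.le
        hs₀.le hs,
      renyi_le_ofReal_two_mul_one_sub_mul_renyi_half hp_meas.aemeasurable hq_meas.aemeasurable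
        hp.le hs₀.le hs⟩
  · have hhalf : renyi μ p q (1 / 2) = renyi μ q p (1 / 2) := by
      rw [renyi_comm]
      norm_num
    have h₁ := ofReal_two_mul_mul_renyi_half_le hq_meas.aemeasurable hp_meas.aemeasurable hp.le
      (s := 1 - s) (by linarith) (by linarith)
    have h₂ := renyi_le_ofReal_two_mul_one_sub_mul_renyi_half hq_meas.aemeasurable
      hp_meas.aemeasurable hq.le (s := 1 - s) (by linarith) (by linarith)
    rw [_root_.sub_sub_cancel] at h₂
    rw [min_eq_right (by linarith), max_eq_left (by linarith), renyi_comm s, hhalf]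
    exact ⟨h₁, h₂⟩

/-- Lemma L38 of the Appendix: for probability densities `p, q` with respect to a σ-finite
measure `μ` and `s ∈ (0,1)`,
`2 min{s,1-s} I^{1/2}(p‖q) ≤ I^s(p‖q) ≤ 2 max{s,1-s} I^{1/2}(p‖q)`. -/
theorem stmt9 {Ω : Type*} [MeasurableSpace Ω] (μ : Measure Ω) [SigmaFinite μ]
    (p q : Ω → ℝ≥0∞) (hp_meas : Measurable p) (hq_meas : Measurable q)
    (hp : ∫⁻ ω, p ω ∂μ = 1) (hq : ∫⁻ ω, q ω ∂μ = 1)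
    (s : ℝ) (hs : s ∈ Ioo (0 : ℝ) 1) :
    ENNReal.ofReal (2 * min s (1 - s)) * renyi μ p q (1 / 2) ≤ renyi μ p q s ∧
    renyi μ p q s ≤ ENNReal.ofReal (2 * max s (1 - s)) * renyi μ p q (1 / 2) :=
  stmt9_general μ p q hp_meas hq_meas hp hq s hs
end

section
/- Let f : ℝ → [0,∞) be a probability density with f(x) = 0 for x ≤ a and f nonincreasing on (a,∞), and let c > 0 be such that ∫_{a+c}^∞ f(u) du > 0. Then sup_{0<s<1} [ −log ∫_ℝ f(u+c)^s f(u)^{1−s} du ] = −log ∫_{a+c}^∞ f(u) du. -/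
open MeasureTheory Set Filter

/-- The identity underlying equation (3-8-1) of the paper: for a probability density `f`
vanishing on `(-∞,a]` and nonincreasing on `(a,∞)`, and `c > 0` with `∫_{a+c}^∞ f > 0`,
`sup_{0<s<1} [-log ∫ f(u+c)^s f(u)^{1-s} du] = -log ∫_{a+c}^∞ f(u) du`. -/
theorem stmt13 (f : ℝ → ℝ) (a : ℝ)
    (hf_meas : Measurable f) (hf_nonneg : ∀ x, 0 ≤ f x)
    (hf_int : ∫ x, f x = 1)
    (hf_zero : ∀ x, x ≤ a → f x = 0) (hf_anti : AntitoneOn f (Ioi a))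
    (c : ℝ) (hc : 0 < c) (hpos : 0 < ∫ u in Ioi (a + c), f u) :
    (⨆ s : Ioo (0 : ℝ) 1,
        -Real.log (∫ u, f (u + c) ^ (s : ℝ) * f u ^ (1 - (s : ℝ))))
      = -Real.log (∫ u in Ioi (a + c), f u) := by
  haveI : Nonempty (Ioo (0 : ℝ) 1) := ⟨⟨1/2, by norm_num⟩⟩
  set I : ℝ := ∫ u in Ioi (a + c), f u with hI
  -- integrability of f
  have hf_integrable : Integrable f := by
    by_contra h
    rw [integral_undef h] at hf_int
    norm_num at hf_int
  have hfc_integrable : Integrable (fun u => f (u + c)) :=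
    hf_integrable.comp_add_right c
  -- the limiting function g
  set g : ℝ → ℝ := (Ioi a).indicator (fun u => f (u + c)) with hg
  have hg_eq : ∀ u, g u = (Ioi (a + c)).indicator f (u + c) := by
    intro u
    by_cases hu : a < u
    · have hu' : a + c < u + c := by linarith
      simp [hg, indicator, mem_Ioi, hu, hu']
    · have hu' : ¬ (a + c < u + c) := by intro h'; exact hu (by linarith)
      simp [hg, indicator, mem_Ioi, hu, hu']
  have hg_integral : ∫ u, g u = I := by
    calc ∫ u, g u = ∫ u, (Ioi (a + c)).indicator f (u + c) := by
          exact integral_congr_ae (Filter.Eventually.of_forall hg_eq)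
      _ = ∫ u, (Ioi (a + c)).indicator f u :=
          integral_add_right_eq_self ((Ioi (a + c)).indicator f) c
      _ = I := integral_indicator measurableSet_Ioi
  have hg_intble : Integrable g := hfc_integrable.indicator measurableSet_Ioi
  -- pointwise lower bound
  have key : ∀ s : ℝ, 0 < s → s < 1 → ∀ u : ℝ,
      g u ≤ f (u + c) ^ s * f u ^ (1 - s) := by
    intro s hs0 hs1 u
    by_cases hu : a < u
    · rw [hg, indicator_of_mem (mem_Ioi.mpr hu)]
      have h1 : f (u + c) ≤ f u :=
        hf_anti (mem_Ioi.mpr hu) (mem_Ioi.mpr (by linarith)) (by linarith)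
      calc f (u + c) = f (u + c) ^ (s + (1 - s)) := by
            rw [show s + (1 - s) = 1 by ring, Real.rpow_one]
        _ = f (u + c) ^ s * f (u + c) ^ (1 - s) :=
            Real.rpow_add' (hf_nonneg _) (by norm_num)
        _ ≤ f (u + c) ^ s * f u ^ (1 - s) := by
            apply mul_le_mul_of_nonneg_left _ (Real.rpow_nonneg (hf_nonneg _) _)
            exact Real.rpow_le_rpow (hf_nonneg _) h1 (by linarith)
    · have h0 : f u = 0 := hf_zero u (le_of_not_gt hu)
      rw [hg, indicator_of_notMem (by simpa using hu), h0,
        Real.zero_rpow (by intro h'; linarith [h'] : (1 : ℝ) - s ≠ 0), mul_zero]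
  -- pointwise upper bound
  have key2 : ∀ s : ℝ, 0 < s → s < 1 → ∀ u : ℝ,
      f (u + c) ^ s * f u ^ (1 - s) ≤ f (u + c) + f u := by
    intro s hs0 hs1 u
    calc f (u + c) ^ s * f u ^ (1 - s) ≤ s * f (u + c) + (1 - s) * f u :=
        Real.geom_mean_le_arith_mean2_weighted hs0.le (by linarith)
          (hf_nonneg _) (hf_nonneg _) (by ring)
      _ ≤ f (u + c) + f u := by
          nlinarith [hf_nonneg (u + c), hf_nonneg u]
  -- measurability and integrability of the integrand
  have hFmeas : ∀ s : ℝ, AEStronglyMeasurable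
      (fun u => f (u + c) ^ s * f u ^ (1 - s)) volume := by
    intro s
    exact (((hf_meas.comp (measurable_add_const c)).pow measurable_const).mul
      (hf_meas.pow measurable_const)).aestronglyMeasurable
  have hFnonneg : ∀ s : ℝ, ∀ u : ℝ, 0 ≤ f (u + c) ^ s * f u ^ (1 - s) := by
    intro s u
    exact mul_nonneg (Real.rpow_nonneg (hf_nonneg _) _) (Real.rpow_nonneg (hf_nonneg _) _)
  have hFintble : ∀ s : ℝ, 0 < s → s < 1 →
      Integrable (fun u => f (u + c) ^ s * f u ^ (1 - s)) := by
    intro s hs0 hs1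
    apply (hfc_integrable.add hf_integrable).mono' (hFmeas s)
    filter_upwards with u
    rw [Real.norm_of_nonneg (hFnonneg s u)]
    exact key2 s hs0 hs1 u
  -- lower bound on integrals
  have hineq : ∀ s : ℝ, 0 < s → s < 1 →
      I ≤ ∫ u, f (u + c) ^ s * f u ^ (1 - s) := by
    intro s hs0 hs1
    rw [← hg_integral]
    exact integral_mono hg_intble (hFintble s hs0 hs1) (key s hs0 hs1)
  -- upper bound on each term of the sup
  have hub : ∀ s : Ioo (0 : ℝ) 1,
      -Real.log (∫ u, f (u + c) ^ (s : ℝ) * f u ^ (1 - (s : ℝ))) ≤ -Real.log I := by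
    rintro ⟨s, hs0, hs1⟩
    exact neg_le_neg (Real.log_le_log hpos (hineq s hs0 hs1))
  have hbdd : BddAbove (Set.range fun s : Ioo (0 : ℝ) 1 =>
      -Real.log (∫ u, f (u + c) ^ (s : ℝ) * f u ^ (1 - (s : ℝ)))) := by
    refine ⟨-Real.log I, ?_⟩
    rintro _ ⟨s, rfl⟩
    exact hub s
  -- the sequence s n → 1
  set t : ℕ → ℝ := fun n => 1 / (n + 1) with ht
  have ht_pos : ∀ n, 0 < t n := fun n => by positivity
  have ht_le : ∀ n, t n ≤ 1 := by
    intro n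
    rw [ht]
    rw [div_le_one (by positivity)]
    simp
  set s : ℕ → ℝ := fun n => 1 - t (n + 1) with hs
  have hs_mem : ∀ n, s n ∈ Ioo (0 : ℝ) 1 := by
    intro n
    constructor
    · have : t (n + 1) < 1 := by
        rw [ht, div_lt_one (by positivity)]
        push_cast; linarith
      simp only [hs]; linarith
    · simp only [hs]; linarith [ht_pos (n + 1)]
  have hs_tendsto : Tendsto s atTop (nhds 1) := by
    have h1 : Tendsto (fun n : ℕ => t (n + 1)) atTop (nhds 0) :=
      (tendsto_one_div_add_atTop_nhds_zero_nat).comp (tendsto_add_atTop_nat 1) |>.congr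
        (by intro n; simp [ht])
    have := h1.const_sub 1
    simpa using this
  -- dominated convergence
  have hDCT : Tendsto (fun n => ∫ u, f (u + c) ^ (s n) * f u ^ (1 - s n))
      atTop (nhds I) := by
    rw [← hg_integral]
    apply tendsto_integral_of_dominated_convergence (fun u => f (u + c) + f u)
      (fun n => hFmeas (s n)) (hfc_integrable.add hf_integrable)
    · intro n
      filter_upwards with u
      rw [Real.norm_of_nonneg (hFnonneg (s n) u)]
      exact key2 (s n) (hs_mem n).1 (hs_mem n).2 u
    · filter_upwards with u
      by_cases hu : a < u
      · by_cases hfu : f u = 0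
        · have hfc0 : f (u + c) = 0 := by
            have h1 : f (u + c) ≤ f u :=
              hf_anti (mem_Ioi.mpr hu) (mem_Ioi.mpr (by linarith)) (by linarith)
            linarith [hf_nonneg (u + c)]
          have : ∀ n, f (u + c) ^ (s n) * f u ^ (1 - s n) = 0 := by
            intro n
            rw [hfc0, Real.zero_rpow (ne_of_gt (hs_mem n).1), zero_mul]
          rw [show g u = 0 by rw [hg, indicator_of_mem (mem_Ioi.mpr hu)]; exact hfc0]
          simp only [this]
          exact tendsto_const_nhds
        · have hfu_pos : 0 < f u := lt_of_le_of_ne (hf_nonneg u) (Ne.symm hfu)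
          have h1 : Tendsto (fun n => f (u + c) ^ (s n)) atTop (nhds (f (u + c) ^ (1 : ℝ))) :=
            Filter.Tendsto.rpow tendsto_const_nhds hs_tendsto (Or.inr one_pos)
          have hsub : Tendsto (fun n => 1 - s n) atTop (nhds 0) := by
            have := hs_tendsto.const_sub 1
            simpa using this
          have h2 : Tendsto (fun n => f u ^ (1 - s n)) atTop (nhds (f u ^ (0 : ℝ))) :=
            Filter.Tendsto.rpow tendsto_const_nhds hsub (Or.inl hfu)
          have := h1.mul h2
          rw [Real.rpow_one, Real.rpow_zero, mul_one] at this
          rw [show g u = f (u + c) by rw [hg, indicator_of_mem (mem_Ioi.mpr hu)]]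
          exact this
      · have h0 : f u = 0 := hf_zero u (le_of_not_gt hu)
        have : ∀ n, f (u + c) ^ (s n) * f u ^ (1 - s n) = 0 := by
          intro n
          rw [h0, Real.zero_rpow (by linarith [(hs_mem n).2] : (1 : ℝ) - s n ≠ 0), mul_zero]
        rw [show g u = 0 by rw [hg, indicator_of_notMem (by simpa using hu)]]
        simp only [this]
        exact tendsto_const_nhds
  -- conclude
  have hlog : Tendsto (fun n => -Real.log (∫ u, f (u + c) ^ (s n) * f u ^ (1 - s n)))
      atTop (nhds (-Real.log I)) :=
    ((Real.continuousAt_log (ne_of_gt hpos)).tendsto.comp hDCT).neg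
  refine le_antisymm (ciSup_le hub) ?_
  refine le_of_tendsto hlog ?_
  filter_upwards with n
  exact le_ciSup hbdd ⟨s n, hs_mem n⟩
end

section
/- Let f be a probability density on ℝ with f = 0 outside (a,b) (where a < b ≤ ∞), and suppose that for some constants A > 0 and κ > 0 one has lim_{x→a+} f(x)/(x−a)^{κ−1} = A. Then lim_{ε→0+} (1/ε^κ)·( −log ∫_{a+ε}^b f(x) dx ) = A/κ. -/
/-!
Since `f` vanishes on `(-∞, a]` and has total mass `1`, the tail `∫_{a+ε}^∞ f` equals `1 - F ε`
with `F ε = ∫_a^{a+ε} f`. Integrating `f x = (A + o(1)) (x - a)^(κ-1)` gives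
`F ε = (A/κ + o(1)) ε^κ`, and `-log (1 - t) = t + o(t)` as `t → 0`.
-/

open MeasureTheory Set Filter Topology Asymptotics

namespace Real

theorem isLittleO_neg_log_one_sub_sub : (fun t => -log (1 - t) - t) =o[𝓝 0] fun t => t := by
  have h : HasDerivAt (fun t => -log (1 - t)) 1 0 := by
    simpa using (((hasDerivAt_id' (0 : ℝ)).const_sub 1).log (by norm_num)).fun_neg
  simpa using hasDerivAt_iff_isLittleO.mp h

end Real

theorem Filter.Tendsto.neg_log_one_sub_div {α : Type*} {l : Filter α} {F r : α → ℝ} {L : ℝ}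
    (hF : Tendsto F l (𝓝 0)) (hFr : Tendsto (fun x => F x / r x) l (𝓝 L)) :
    Tendsto (fun x => -Real.log (1 - F x) / r x) l (𝓝 L) := by
  have hrem : Tendsto (fun t => (-Real.log (1 - t) - t) / t) (𝓝 0) (𝓝 0) :=
    Real.isLittleO_neg_log_one_sub_sub.tendsto_div_nhds_zero
  have h := ((hrem.comp hF).mul hFr).add hFr
  rw [zero_mul, zero_add] at h
  -- `-log (1 - F) / r = ((-log (1 - F) - F) / F) * (F / r) + F / r`, also where `F x = 0`
  refine h.congr fun x => ?_
  rcases eq_or_ne (F x) 0 with hx | hx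
  · simp [hx]
  · simp only [Function.comp_apply]
    rw [div_mul_div_cancel₀ hx, ← add_div, sub_add_cancel]

theorem setIntegral_Ioi_eq_integral_sub_setIntegral_Ioc {μ : Measure ℝ} {f : ℝ → ℝ} {a b : ℝ}
    (hf : Integrable f μ) (h0 : ∀ x ≤ a, f x = 0) :
    ∫ x in Ioi b, f x ∂μ = ∫ x, f x ∂μ - ∫ x in Ioc a b, f x ∂μ := by
  have hIic : ∫ x in Iic b, f x ∂μ = ∫ x in Ioc a b, f x ∂μ :=
    setIntegral_eq_of_subset_of_forall_sdiff_eq_zero measurableSet_Iic Ioc_subset_Iic_self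
      fun x hx => h0 x (not_lt.mp fun hax => hx.2 ⟨hax, hx.1⟩)
  rw [← integral_add_compl measurableSet_Iic hf, compl_Iic, hIic, add_sub_cancel_left]

theorem integrableOn_Ioc_sub_rpow {a ε κ : ℝ} (hε : 0 ≤ ε) (hκ : 0 < κ) :
    IntegrableOn (fun x => (x - a) ^ (κ - 1)) (Ioc a (a + ε)) := by
  have h := (intervalIntegral.intervalIntegrable_rpow' (a := 0) (b := ε) (r := κ - 1)
    (by linarith)).comp_sub_right a
  rw [zero_add, add_comm] at h
  exact (intervalIntegrable_iff_integrableOn_Ioc_of_le (by linarith)).mp h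

theorem integral_Ioc_sub_rpow {a ε κ : ℝ} (hε : 0 ≤ ε) (hκ : 0 < κ) :
    ∫ x in Ioc a (a + ε), (x - a) ^ (κ - 1) = ε ^ κ / κ := by
  rw [← intervalIntegral.integral_of_le (by linarith),
    intervalIntegral.integral_comp_sub_right (fun u => u ^ (κ - 1)), sub_self,
    add_sub_cancel_left, integral_rpow (Or.inl (by linarith)), sub_add_cancel,
    Real.zero_rpow hκ.ne', sub_zero]

theorem abs_setIntegral_Ioc_sub_le {f : ℝ → ℝ} {a ε κ A c : ℝ} (hε : 0 ≤ ε) (hκ : 0 < κ)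
    (hf : IntegrableOn f (Ioc a (a + ε)))
    (hclose : ∀ x ∈ Ioc a (a + ε), |f x / (x - a) ^ (κ - 1) - A| ≤ c) :
    |(∫ x in Ioc a (a + ε), f x) - A * (ε ^ κ / κ)| ≤ c * (ε ^ κ / κ) := by
  have hg := integrableOn_Ioc_sub_rpow (a := a) hε hκ
  have hbound : ∀ x ∈ Ioc a (a + ε),
      ‖f x - A * (x - a) ^ (κ - 1)‖ ≤ c * (x - a) ^ (κ - 1) := by
    intro x hx
    have hpos : 0 < (x - a) ^ (κ - 1) := Real.rpow_pos_of_pos (sub_pos.2 hx.1) _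
    calc ‖f x - A * (x - a) ^ (κ - 1)‖
        = ‖(f x / (x - a) ^ (κ - 1) - A) * (x - a) ^ (κ - 1)‖ := by
          rw [sub_mul, div_mul_cancel₀ _ hpos.ne']
      _ = |f x / (x - a) ^ (κ - 1) - A| * (x - a) ^ (κ - 1) := by
          rw [norm_mul, Real.norm_eq_abs, Real.norm_of_nonneg hpos.le]
      _ ≤ c * (x - a) ^ (κ - 1) := by gcongr; exact hclose x hx
  rw [← integral_Ioc_sub_rpow hε hκ, ← integral_const_mul, ← integral_const_mul,
    ← integral_sub hf (hg.const_mul A), ← Real.norm_eq_abs]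
  exact norm_integral_le_of_norm_le (hg.const_mul c)
    ((ae_restrict_iff' measurableSet_Ioc).2 (Eventually.of_forall hbound))

theorem tendsto_setIntegral_Ioc_div_rpow {f : ℝ → ℝ} {a A κ : ℝ} (hκ : 0 < κ)
    (hf : IntegrableAtFilter f (𝓝[>] a))
    (h : Tendsto (fun x => f x / (x - a) ^ (κ - 1)) (𝓝[>] a) (𝓝 A)) :
    Tendsto (fun ε => (∫ x in Ioc a (a + ε), f x) / ε ^ κ) (𝓝[>] 0) (𝓝 (A / κ)) := by
  rw [Metric.tendsto_nhds]
  intro δ hδ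
  obtain ⟨s, hs, hfs⟩ := hf
  obtain ⟨u, hau : a < u, hu⟩ := mem_nhdsGT_iff_exists_Ioo_subset.mp
    ((eventually_mem_set.2 hs).and ((Metric.tendsto_nhds.mp h) (κ * δ / 2) (by positivity)))
  filter_upwards [Ioo_mem_nhdsGT (sub_pos.2 hau)] with ε ⟨hε, hεu⟩
  have hsub : Ioc a (a + ε) ⊆ Ioo a u := Ioc_subset_Ioo_right (by linarith)
  have hest := abs_setIntegral_Ioc_sub_le hε.le hκ (hfs.mono_set fun x hx => (hu (hsub hx)).1)
    fun x hx => (Real.dist_eq _ _ ▸ (hu (hsub hx)).2).le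
  have hεκ : 0 < ε ^ κ := Real.rpow_pos_of_pos hε κ
  calc dist ((∫ x in Ioc a (a + ε), f x) / ε ^ κ) (A / κ)
      = |(∫ x in Ioc a (a + ε), f x) - A * (ε ^ κ / κ)| / ε ^ κ := by
        rw [Real.dist_eq, ← abs_of_pos hεκ, ← abs_div, abs_of_pos hεκ]
        congr 1
        field_simp
    _ ≤ κ * δ / 2 * (ε ^ κ / κ) / ε ^ κ := by gcongr
    _ = δ / 2 := by field_simp
    _ < δ := by linarith

theorem stmt14_general (f : ℝ → ℝ) (a : ℝ)
    (hf_int : ∫ x, f x = 1)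
    (hf_zero : ∀ x, x ≤ a → f x = 0)
    (A κ : ℝ) (hκ : 0 < κ)
    (h_asymp : Tendsto (fun x => f x / (x - a) ^ (κ - 1)) (𝓝[>] a) (𝓝 A)) :
    Tendsto (fun ε : ℝ => (-Real.log (∫ x in Ioi (a + ε), f x)) / ε ^ κ)
      (𝓝[>] (0 : ℝ)) (𝓝 (A / κ)) := by
  have hf : Integrable f := .of_integral_ne_zero (by rw [hf_int]; exact one_ne_zero)
  have hratio := tendsto_setIntegral_Ioc_div_rpow hκ (hf.integrableAtFilter _) h_asymp
  have hmass : Tendsto (fun ε => ∫ x in Ioc a (a + ε), f x) (𝓝[>] 0) (𝓝 0) := by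
    have hεκ : Tendsto (fun ε : ℝ => ε ^ κ) (𝓝[>] 0) (𝓝 0) :=
      ((Real.continuous_rpow_const hκ.le).tendsto' 0 0 (Real.zero_rpow hκ.ne')).mono_left
        nhdsWithin_le_nhds
    refine (mul_zero (A / κ) ▸ hratio.mul hεκ).congr' ?_
    filter_upwards [self_mem_nhdsWithin] with ε hε
    exact div_mul_cancel₀ _ (Real.rpow_pos_of_pos hε κ).ne'
  refine (hmass.neg_log_one_sub_div hratio).congr fun ε => ?_
  rw [setIntegral_Ioi_eq_integral_sub_setIntegral_Ioc hf hf_zero, hf_int]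

/-- The asymptotic expansion (4-5-6) of the paper: if a probability density `f` vanishes on
`(-∞,a]` (in particular this covers densities supported in `(a,b)` for any `b ≤ ∞`, since then
`∫_{a+ε}^b f = ∫_{a+ε}^∞ f`) and `f(x) ≍ A (x-a)^{κ-1}` as `x → a+`, then
`-log ∫_{a+ε}^∞ f = (A/κ) ε^κ + o(ε^κ)` as `ε → 0+`. -/
theorem stmt14 (f : ℝ → ℝ) (a : ℝ)
    (hf_meas : Measurable f) (hf_nonneg : ∀ x, 0 ≤ f x)
    (hf_int : ∫ x, f x = 1)
    (hf_zero : ∀ x, x ≤ a → f x = 0)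
    (A κ : ℝ) (hA : 0 < A) (hκ : 0 < κ)
    (h_asymp : Tendsto (fun x => f x / (x - a) ^ (κ - 1)) (𝓝[>] a) (𝓝 A)) :
    Tendsto (fun ε : ℝ => (-Real.log (∫ x in Ioi (a + ε), f x)) / ε ^ κ)
      (𝓝[>] (0 : ℝ)) (𝓝 (A / κ)) :=
  stmt14_general f a hf_int hf_zero A κ hκ h_asymp
end

section
/- Let {p_θ : θ ∈ ℝ} be a family of probability measures on a measurable space Ω and let T = {T_n} be a weakly consistent estimator sequence, i.e. for every δ > 0 and every θ, p_θ^n{|T_n − θ| > δ} → 0 as n → ∞. Then for every θ ∈ ℝ, ε > 0 and every θ' with |θ' − θ| > ε, β(T,θ,ε) ≤ D(p_{θ'}‖p_θ), where D denotes the Kullback–Leibler divergence. In particular β(T,θ,ε) ≤ min{ inf_{θ' > θ+ε} D(p_{θ'}‖p_θ), inf_{θ' < θ−ε} D(p_{θ'}‖p_θ) }. -/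
/-!
Fix `θ'` with `|θ' - θ| > ε` and put `A_n = {|T_n - θ| > ε}`. Consistency at `θ'` forces
`p_{θ'}^n(A_n) → 1`. Gibbs' inequality, applied to `A_n` and to its complement separately, gives
the change-of-measure bound `-log P(A) ≤ (D(Q‖P) + 2) / Q(A)` for every event `A`, and the chain
rule gives `D(p_{θ'}^n‖p_θ^n) = n D(p_{θ'}‖p_θ)`. Dividing by `n` and letting `n → ∞` yields
`β(T,θ,ε) ≤ D(p_{θ'}‖p_θ)`.
-/

open MeasureTheory Filter Set Topology ENNReal NNReal

/-- The `n`-fold product (i.i.d.) measure of `p`. -/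
noncomputable def prodMeas {Ω : Type*} [MeasurableSpace Ω] (p : Measure Ω) (n : ℕ) :
    Measure (Fin n → Ω) :=
  Measure.pi fun _ => p

/-- `β(T,θ,ε) = liminf (-1/n) log p_θ^n { |T_n - θ| > ε }`. -/
noncomputable def betaAbs {Ω : Type*} [MeasurableSpace Ω] (p : ℝ → Measure Ω)
    (T : (n : ℕ) → (Fin n → Ω) → ℝ) (θ ε : ℝ) : ℝ≥0∞ :=
  Filter.atTop.liminf fun n : ℕ =>
    negLog (prodMeas (p θ) n {x | ε < |T n x - θ|}) / (n : ℝ≥0∞)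

/-- The Kullback–Leibler divergence `D(p‖q) = ∫ log (dp/dq) dp` if `p ≪ q` (and the
log-likelihood ratio is integrable), `+∞` otherwise. -/
noncomputable def klDiv {Ω : Type*} [MeasurableSpace Ω] (p q : Measure Ω) : ℝ≥0∞ :=
  open scoped Classical in
  if p ≪ q ∧ Integrable (llr p q) p then ENNReal.ofReal (∫ x, llr p q x ∂p) else ⊤

-- Mathlib's divergence is always written `InformationTheory.klDiv`: a bare `klDiv` would clash
-- with the `klDiv` defined above.
namespace InformationTheory

lemma klDiv_map_measurableEquiv {α β : Type*} [MeasurableSpace α] [MeasurableSpace β]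
    (μ ν : Measure α) [IsFiniteMeasure μ] [IsFiniteMeasure ν] (e : α ≃ᵐ β) :
    InformationTheory.klDiv (μ.map e) (ν.map e) = InformationTheory.klDiv μ ν := by
  refine le_antisymm (klDiv_map_le μ ν e.measurable) ?_
  calc InformationTheory.klDiv μ ν
      = InformationTheory.klDiv ((μ.map e).map e.symm) ((ν.map e).map e.symm) := by
        simp only [Measure.map_map e.symm.measurable e.measurable, e.symm_comp_self,
          Measure.map_id]
    _ ≤ InformationTheory.klDiv (μ.map e) (ν.map e) := klDiv_map_le _ _ e.symm.measurable

lemma klDiv_prod {α β : Type*} [MeasurableSpace α] [MeasurableSpace β]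
    (μ ν : Measure α) (μ' ν' : Measure β) [IsProbabilityMeasure μ]
    [IsProbabilityMeasure ν] [IsProbabilityMeasure μ'] [IsProbabilityMeasure ν'] :
    InformationTheory.klDiv (μ.prod μ') (ν.prod ν') =
      InformationTheory.klDiv μ ν + InformationTheory.klDiv μ' ν' := by
  have h_right : InformationTheory.klDiv (μ.prod μ') (μ.prod ν') =
      InformationTheory.klDiv μ' ν' := by
    rw [← klDiv_map_measurableEquiv _ _ MeasurableEquiv.prodComm,
      show ⇑MeasurableEquiv.prodComm = Prod.swap from rfl, Measure.prod_swap, Measure.prod_swap,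
      ← Measure.compProd_const, ← Measure.compProd_const, klDiv_compProd_left]
  rw [← Measure.compProd_const, ← Measure.compProd_const, klDiv_compProd_eq_add,
    Measure.compProd_const, Measure.compProd_const, h_right]

lemma klDiv_pi {n : ℕ} {α : Fin n → Type*} [∀ i, MeasurableSpace (α i)]
    (μ ν : ∀ i, Measure (α i)) [∀ i, IsProbabilityMeasure (μ i)]
    [∀ i, IsProbabilityMeasure (ν i)] :
    InformationTheory.klDiv (Measure.pi μ) (Measure.pi ν) =
      ∑ i, InformationTheory.klDiv (μ i) (ν i) := by
  induction n with
  | zero => rw [Measure.pi_of_empty μ, Measure.pi_of_empty ν, klDiv_self, Fin.sum_univ_zero]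
  | succ n ih =>
    rw [← (measurePreserving_piFinSuccAbove μ 0).symm.map_eq,
      ← (measurePreserving_piFinSuccAbove ν 0).symm.map_eq, klDiv_map_measurableEquiv,
      klDiv_prod, ih, Fin.sum_univ_succ]
    rfl

end InformationTheory

section LogLikelihoodRatio

variable {α : Type*} [MeasurableSpace α] {μ ν : Measure α} {s : Set α}

lemma llr_restrict_ae [SigmaFinite μ] [SigmaFinite ν] (hμν : μ ≪ ν) (hs : MeasurableSet s) :
    llr (μ.restrict s) (ν.restrict s) =ᵐ[μ.restrict s] llr μ ν := by
  have h_restrict : μ.restrict s = (ν.restrict s).withDensity (μ.rnDeriv ν) := by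
    rw [← restrict_withDensity hs, Measure.withDensity_rnDeriv_eq μ ν hμν]
  have h_rnDeriv : (μ.restrict s).rnDeriv (ν.restrict s) =ᵐ[ν.restrict s] μ.rnDeriv ν := by
    rw [h_restrict]
    exact Measure.rnDeriv_withDensity _ (Measure.measurable_rnDeriv μ ν)
  filter_upwards [(hμν.restrict s).ae_le h_rnDeriv] with x hx
  simp only [llr, hx]

lemma setIntegral_llr_add_mul_log_nonneg [IsFiniteMeasure μ] [IsFiniteMeasure ν] (hμν : μ ≪ ν)
    (h_int : Integrable (llr μ ν) μ) (hs : MeasurableSet s) :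
    0 ≤ ∫ x in s, llr μ ν x ∂μ + μ.real s * Real.log (ν.real s) + 1 - μ.real s := by
  have h_ae := llr_restrict_ae hμν hs
  have h := InformationTheory.integral_llr_add_mul_log_nonneg (hμν.restrict s)
    ((h_int.restrict (s := s)).congr h_ae.symm)
  rwa [integral_congr_ae h_ae, measureReal_restrict_apply_univ,
    measureReal_restrict_apply_univ] at h

lemma neg_mul_log_le_integral_llr_add_two [IsProbabilityMeasure μ] [IsProbabilityMeasure ν]
    (hμν : μ ≪ ν) (h_int : Integrable (llr μ ν) μ) (hs : MeasurableSet s) :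
    -(μ.real s * Real.log (ν.real s)) ≤ ∫ x, llr μ ν x ∂μ + 2 := by
  have h_in := setIntegral_llr_add_mul_log_nonneg hμν h_int hs
  have h_out := setIntegral_llr_add_mul_log_nonneg hμν h_int hs.compl
  have h_log_out : Real.log (ν.real sᶜ) ≤ 0 := Real.log_nonpos measureReal_nonneg measureReal_le_one
  have h_mul_out : μ.real sᶜ * Real.log (ν.real sᶜ) ≤ 0 :=
    mul_nonpos_of_nonneg_of_nonpos measureReal_nonneg h_log_out
  rw [← integral_add_compl hs h_int]
  linarith [measureReal_nonneg (μ := μ) (s := s), measureReal_nonneg (μ := μ) (s := sᶜ)]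

end LogLikelihoodRatio

section Bahadur

variable {Ω : Type*} [MeasurableSpace Ω]

lemma klDiv_eq_informationTheory_klDiv (μ ν : Measure Ω) [IsProbabilityMeasure μ]
    [IsProbabilityMeasure ν] : klDiv μ ν = InformationTheory.klDiv μ ν := by
  by_cases h : μ ≪ ν ∧ Integrable (llr μ ν) μ
  · rw [klDiv, if_pos h, InformationTheory.klDiv_of_ac_of_integrable h.1 h.2]
    simp
  · rw [klDiv, if_neg h, eq_comm, InformationTheory.klDiv_eq_top_iff]
    tauto

lemma negLog_le_klDiv_add_two_div (μ ν : Measure Ω) [IsProbabilityMeasure μ]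
    [IsProbabilityMeasure ν] {s : Set Ω} (hs : MeasurableSet s) :
    negLog (ν s) ≤ (InformationTheory.klDiv μ ν + 2) / μ s := by
  by_cases hK : InformationTheory.klDiv μ ν = ∞
  · rw [hK, top_add, ENNReal.top_div_of_ne_top (measure_ne_top μ s)]
    exact le_top
  obtain ⟨hμν, h_int⟩ := InformationTheory.klDiv_ne_top_iff.mp hK
  by_cases hμs : μ s = 0
  · rw [hμs, ENNReal.div_zero (by simp)]
    exact le_top
  have hνs : ν s ≠ 0 := fun h => hμs (hμν h)
  have hμs_pos : 0 < μ.real s := ENNReal.toReal_pos hμs (measure_ne_top μ s)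
  have h_gibbs : 0 ≤ ∫ x, llr μ ν x ∂μ := by
    simpa using InformationTheory.integral_llr_add_sub_measure_univ_nonneg hμν h_int
  have h_bound := neg_mul_log_le_integral_llr_add_two hμν h_int hs
  rw [negLog, if_neg hνs, InformationTheory.klDiv_of_ac_of_integrable hμν h_int,
    ← ofReal_measureReal (μ := μ), probReal_univ, probReal_univ,
    add_sub_cancel_right, show (2 : ℝ≥0∞) = ENNReal.ofReal 2 by norm_num,
    ← ENNReal.ofReal_add h_gibbs zero_le_two, ← ENNReal.ofReal_div_of_pos hμs_pos]
  refine ENNReal.ofReal_le_ofReal ((le_div_iff₀ hμs_pos).mpr ?_)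
  rw [← measureReal_def]
  linarith

instance (μ : Measure Ω) [IsProbabilityMeasure μ] (n : ℕ) :
    IsProbabilityMeasure (prodMeas μ n) := by
  unfold prodMeas
  infer_instance

lemma klDiv_prodMeas (μ ν : Measure Ω) [IsProbabilityMeasure μ] [IsProbabilityMeasure ν]
    (n : ℕ) :
    InformationTheory.klDiv (prodMeas μ n) (prodMeas ν n) = n * InformationTheory.klDiv μ ν := by
  simp [prodMeas, InformationTheory.klDiv_pi]

lemma liminf_negLog_div_le_klDiv (μ ν : Measure Ω) [IsProbabilityMeasure μ]
    [IsProbabilityMeasure ν] {s : ∀ n, Set (Fin n → Ω)} (hs : ∀ n, MeasurableSet (s n))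
    (hμs : Tendsto (fun n => prodMeas μ n (s n)) atTop (𝓝 1)) :
    atTop.liminf (fun n : ℕ => negLog (prodMeas ν n (s n)) / n) ≤
      InformationTheory.klDiv μ ν := by
  set K := InformationTheory.klDiv μ ν
  have h_two_div : Tendsto (fun n : ℕ => (2 : ℝ≥0∞) / n) atTop (𝓝 0) := by
    simpa [div_eq_mul_inv] using
      ENNReal.Tendsto.const_mul ENNReal.tendsto_inv_nat_nhds_zero (Or.inr ENNReal.ofNat_ne_top)
  have h_lim : Tendsto (fun n : ℕ => (K + 2 / n) / prodMeas μ n (s n)) atTop (𝓝 K) := by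
    simpa using ENNReal.Tendsto.div (tendsto_const_nhds.add h_two_div) (Or.inr one_ne_zero) hμs
      (Or.inl one_ne_top)
  have h_bound : ∀ᶠ n : ℕ in atTop,
      negLog (prodMeas ν n (s n)) / n ≤ (K + 2 / n) / prodMeas μ n (s n) := by
    filter_upwards [eventually_ne_atTop 0] with n hn
    calc negLog (prodMeas ν n (s n)) / n ≤ (n * K + 2) / prodMeas μ n (s n) / n := by
          gcongr
          rw [← klDiv_prodMeas]
          exact negLog_le_klDiv_add_two_div _ _ (hs n)
      _ = (K + 2 / n) / prodMeas μ n (s n) := by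
          rw [ENNReal.div_right_comm, ENNReal.add_div, mul_comm,
            ENNReal.mul_div_cancel_right (by exact_mod_cast hn) (ENNReal.natCast_ne_top n)]
  calc atTop.liminf (fun n : ℕ => negLog (prodMeas ν n (s n)) / n)
      ≤ atTop.liminf (fun n : ℕ => (K + 2 / n) / prodMeas μ n (s n)) :=
        liminf_le_liminf h_bound
    _ = K := h_lim.liminf_eq

lemma measurableSet_lt_abs_sub {α : Type*} [MeasurableSpace α] {f : α → ℝ} (hf : Measurable f)
    (ε c : ℝ) : MeasurableSet {x | ε < |f x - c|} :=
  measurableSet_lt measurable_const (hf.sub measurable_const).abs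

lemma tendsto_prodMeas_abs_sub_gt_one (μ : Measure Ω) [IsProbabilityMeasure μ]
    {T : (n : ℕ) → (Fin n → Ω) → ℝ} (hT : ∀ n, Measurable (T n)) {θ θ' ε : ℝ}
    (hε : ε < |θ' - θ|)
    (h_cons : ∀ δ > (0 : ℝ),
      Tendsto (fun n : ℕ => prodMeas μ n {x | δ < |T n x - θ'|}) atTop (𝓝 0)) :
    Tendsto (fun n : ℕ => prodMeas μ n {x | ε < |T n x - θ|}) atTop (𝓝 1) := by
  obtain ⟨δ, hδ_pos, hδ⟩ : ∃ δ > (0 : ℝ), ε + δ < |θ' - θ| :=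
    ⟨(|θ' - θ| - ε) / 2, by linarith, by linarith⟩
  have h_near_subset : ∀ n, {x | ε < |T n x - θ|}ᶜ ⊆ {x | δ < |T n x - θ'|} := by
    intro n x (hx : ¬ ε < |T n x - θ|)
    show δ < |T n x - θ'|
    have h_triangle := abs_sub_abs_le_abs_sub (θ' - θ) (T n x - θ)
    rw [show θ' - θ - (T n x - θ) = θ' - T n x by ring] at h_triangle
    linarith [abs_sub_comm (T n x) θ']
  have h_near : Tendsto (fun n : ℕ => prodMeas μ n {x | ε < |T n x - θ|}ᶜ) atTop (𝓝 0) :=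
    tendsto_of_tendsto_of_tendsto_of_le_of_le tendsto_const_nhds (h_cons δ hδ_pos)
      (fun _ => zero_le) (fun n => measure_mono (h_near_subset n))
  rw [← ENNReal.tendsto_const_sub_nhds_zero_iff one_ne_top (fun _ => prob_le_one)]
  simpa only [← prob_compl_eq_one_sub (measurableSet_lt_abs_sub (hT _) ε θ)] using h_near

end Bahadur

/-- Bahadur's inequality (Baha4): for a weakly consistent estimator sequence `T`,
`β(T,θ,ε) ≤ D(p_{θ'}‖p_θ)` whenever `|θ' - θ| > ε`; in particular
`β(T,θ,ε) ≤ min{inf_{θ' > θ+ε} D(p_{θ'}‖p_θ), inf_{θ' < θ-ε} D(p_{θ'}‖p_θ)}`. -/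
theorem stmt19 {Ω : Type*} [MeasurableSpace Ω] (p : ℝ → Measure Ω)
    (hprob : ∀ θ, IsProbabilityMeasure (p θ))
    (T : (n : ℕ) → (Fin n → Ω) → ℝ) (hT_meas : ∀ n, Measurable (T n))
    (hT_consistent : ∀ θ : ℝ, ∀ δ > (0 : ℝ),
      Tendsto (fun n : ℕ => prodMeas (p θ) n {x | δ < |T n x - θ|}) atTop (𝓝 0)) :
    ∀ (θ ε : ℝ), 0 < ε →
      (∀ θ' : ℝ, ε < |θ' - θ| → betaAbs p T θ ε ≤ klDiv (p θ') (p θ)) ∧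
      betaAbs p T θ ε ≤
        min (⨅ θ' ∈ {θ' : ℝ | θ + ε < θ'}, klDiv (p θ') (p θ))
            (⨅ θ' ∈ {θ' : ℝ | θ' < θ - ε}, klDiv (p θ') (p θ)) := by
  intro θ ε _
  have h_far : ∀ θ' : ℝ, ε < |θ' - θ| → betaAbs p T θ ε ≤ klDiv (p θ') (p θ) := by
    intro θ' hθ'
    rw [klDiv_eq_informationTheory_klDiv]
    exact liminf_negLog_div_le_klDiv _ _
      (fun n => measurableSet_lt_abs_sub (hT_meas n) ε θ)
      (tendsto_prodMeas_abs_sub_gt_one _ hT_meas hθ' (hT_consistent θ'))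
  refine ⟨h_far, le_min ?_ ?_⟩
  · exact le_iInf₂ fun θ' (hθ' : θ + ε < θ') => h_far θ' (lt_abs.mpr (.inl (by linarith)))
  · exact le_iInf₂ fun θ' (hθ' : θ' < θ - ε) => h_far θ' (lt_abs.mpr (.inr (by linarith)))
end
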